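/- arXiv:math/0505085 — 6 statements merged into one kernel-verified Lean document; each statement's English description precedes it below -/
import Mathlib

section
/- Let n ≥ 1 and m ≥ 1. Every set of pairwise noncrossing m-allowable diagonals of the convex ((n+1)m+2)-gon that is maximal with respect to inclusion has exactly n elements (i.e., the complex Δ(m,n) is pure of dimension n−1). -/
/-- `x` lies strictly inside the open arc from `a` counterclockwise to `b`
in the convex `N`-gon whose vertices are identified with `ZMod N`. -/
def ArcBtw {N : ℕ} (a b x : ZMod N) : Prop :=
  ∃ k : ℕ, 0 < k ∧ k < (b - a).val ∧ x = a + (k : ZMod N)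

/-- `p` is a diagonal of the convex `N`-gon: an unordered pair `{a, b}` of
vertices with `b ∉ {a, a+1, a-1}`. -/
def IsDiagonal {N : ℕ} (p : Sym2 (ZMod N)) : Prop :=
  ∃ a b : ZMod N, p = s(a, b) ∧ b ≠ a ∧ b ≠ a + 1 ∧ b ≠ a - 1

/-- The diagonals `p` and `q` cross: their endpoints interleave in cyclic
order, i.e. exactly one endpoint of one of them lies strictly inside one of
the two open arcs determined by the other. -/
def Crosses {N : ℕ} (p q : Sym2 (ZMod N)) : Prop :=
  ∃ a b c d : ZMod N, p = s(a, b) ∧ q = s(c, d) ∧ ArcBtw a b c ∧ ArcBtw b a d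

/-- The diagonal `p = {a, b}` is `m`-allowable: the number of vertices
strictly between `a` and `b` on each of the two arcs determined by `{a, b}`
is divisible by `m`. -/
def MAllowable {N : ℕ} (m : ℕ) (p : Sym2 (ZMod N)) : Prop :=
  ∃ a b : ZMod N, p = s(a, b) ∧ m ∣ ((b - a).val - 1) ∧ m ∣ ((a - b).val - 1)

/-- A face of the complex `Δ(m, n)` (with `N = (n+1)m+2`): a set of pairwise
noncrossing `m`-allowable diagonals of the convex `N`-gon. -/
def IsFace {N : ℕ} (m : ℕ) (F : Finset (Sym2 (ZMod N))) : Prop :=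
  (∀ p ∈ F, IsDiagonal p ∧ MAllowable m p) ∧ ∀ p ∈ F, ∀ q ∈ F, ¬ Crosses p q

/-!
Induction on `n`. The `(m + 2)`-gon has no `m`-allowable diagonal, which settles `n = 0`.
For `n ≥ 1`, take a shortest diagonal `{a, b}` of a maximal face `F`. No diagonal of `F` has an
endpoint strictly between `a` and `b` (it would be shorter or would cross `{a, b}`), so the
allowable diagonal `{a, a + (m + 1)}` crosses nothing in `F`; by maximality and minimality it is
`{a, b}`, an "ear" of `F`. Rotate the ear to `{0, m + 1}` and collapse the vertices `0, …, m`
into one. Collapsing shortens by `m` exactly the arc that runs over the ear, so it preserves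
allowability and crossings of the remaining diagonals and maps them bijectively onto a maximal
face of the `(n m + 2)`-gon. Hence `F` has one diagonal more than that face.
-/

section ArcLength

variable {N : ℕ}

def arcLen (a b : ZMod N) : ℕ := (b - a).val

lemma arcLen_eq_zero_iff {a b : ZMod N} : arcLen a b = 0 ↔ a = b := by
  rw [arcLen, ZMod.val_eq_zero, sub_eq_zero, eq_comm]

lemma arcLen_pos_iff {a b : ZMod N} : 0 < arcLen a b ↔ a ≠ b := by
  rw [Nat.pos_iff_ne_zero, ne_eq, arcLen_eq_zero_iff]

@[simp]
lemma arcLen_self (a : ZMod N) : arcLen a a = 0 := arcLen_eq_zero_iff.mpr rfl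

lemma arcLen_zero_left (x : ZMod N) : arcLen 0 x = x.val := by
  rw [arcLen, sub_zero]

lemma arcLen_add_right (a b t : ZMod N) : arcLen (a + t) (b + t) = arcLen a b := by
  simp [arcLen]

lemma arcLen_add_natCast {k : ℕ} (a : ZMod N) (hk : k < N) : arcLen a (a + k) = k := by
  rw [arcLen, add_sub_cancel_left, ZMod.val_cast_of_lt hk]

variable [NeZero N]

lemma arcLen_lt (a b : ZMod N) : arcLen a b < N := ZMod.val_lt _

lemma natCast_arcLen (a b : ZMod N) : (arcLen a b : ZMod N) = b - a :=
  ZMod.natCast_zmod_val _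

lemma eq_add_arcLen (a b : ZMod N) : b = a + arcLen a b := by
  rw [natCast_arcLen]; ring

lemma arcLen_injective (a : ZMod N) : Function.Injective (arcLen a) := fun x y h => by
  rw [eq_add_arcLen a x, eq_add_arcLen a y, h]

lemma arcLen_add_arcLen {a b : ZMod N} (h : a ≠ b) : arcLen a b + arcLen b a = N := by
  have hpos : 0 < arcLen a b := arcLen_pos_iff.mpr h
  have hdvd : N ∣ arcLen a b + arcLen b a := by
    rw [← ZMod.natCast_eq_zero_iff, Nat.cast_add, natCast_arcLen, natCast_arcLen]; ring
  obtain ⟨k, hk⟩ := hdvd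
  have := arcLen_lt a b
  have := arcLen_lt b a
  rcases k with _ | _ | k
  · omega
  · omega
  · nlinarith

lemma arcLen_of_le {a b c : ZMod N} (h : arcLen a c ≤ arcLen a b) :
    arcLen c b = arcLen a b - arcLen a c := by
  have hb : b - c = ((arcLen a b - arcLen a c : ℕ) : ZMod N) := by
    push_cast [Nat.cast_sub h, natCast_arcLen]; ring
  rw [arcLen, hb, ZMod.val_cast_of_lt (by have := arcLen_lt a b; omega)]

lemma arcLen_trans {a b c : ZMod N} (h : arcLen a b + arcLen b c < N) :
    arcLen a c = arcLen a b + arcLen b c := by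
  have hc : c - a = ((arcLen a b + arcLen b c : ℕ) : ZMod N) := by
    push_cast [natCast_arcLen]; ring
  rw [arcLen, hc, ZMod.val_cast_of_lt h]

lemma arcLen_eq_ite (x y : ZMod N) :
    arcLen x y = if x.val ≤ y.val then y.val - x.val else N - x.val + y.val := by
  have hx := ZMod.val_lt x
  split_ifs with h
  · rw [arcLen, ZMod.val_sub h]
  · have hyx : y - x = ((N - x.val + y.val : ℕ) : ZMod N) := by
      push_cast [Nat.cast_sub hx.le, ZMod.natCast_zmod_val, ZMod.natCast_self]; ring
    rw [arcLen, hyx, ZMod.val_cast_of_lt (by omega)]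

lemma arcLen_eq_one_iff (hN : 1 < N) {a b : ZMod N} : arcLen a b = 1 ↔ b = a + 1 := by
  refine ⟨fun h => by rw [eq_add_arcLen a b, h, Nat.cast_one], ?_⟩
  rintro rfl
  exact_mod_cast arcLen_add_natCast a hN

end ArcLength

lemma Sym2.exists_mk_eq_and_iff {α : Type*} {r : α → α → Prop} (hr : ∀ x y, r x y → r y x)
    (a b : α) : (∃ x y, s(a, b) = s(x, y) ∧ r x y) ↔ r a b := by
  refine ⟨?_, fun h => ⟨a, b, rfl, h⟩⟩
  rintro ⟨x, y, hxy, h⟩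
  rcases Sym2.eq_iff.mp hxy with ⟨rfl, rfl⟩ | ⟨rfl, rfl⟩
  exacts [h, hr _ _ h]

section Polygon

variable {N : ℕ}

def IsAllowableDiagonal (m : ℕ) (p : Sym2 (ZMod N)) : Prop := IsDiagonal p ∧ MAllowable m p

lemma mAllowable_iff {m : ℕ} {a b : ZMod N} :
    MAllowable m s(a, b) ↔ m ∣ arcLen a b - 1 ∧ m ∣ arcLen b a - 1 :=
  Sym2.exists_mk_eq_and_iff (fun _ _ => And.symm) a b

lemma crosses_iff {a b c d : ZMod N} :
    Crosses s(a, b) s(c, d) ↔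
      (ArcBtw a b c ∧ ArcBtw b a d) ∨ (ArcBtw a b d ∧ ArcBtw b a c) := by
  constructor
  · rintro ⟨x, y, z, w, hp, hq, h1, h2⟩
    rcases Sym2.eq_iff.mp hp with ⟨rfl, rfl⟩ | ⟨rfl, rfl⟩ <;>
      rcases Sym2.eq_iff.mp hq with ⟨rfl, rfl⟩ | ⟨rfl, rfl⟩
    exacts [.inl ⟨h1, h2⟩, .inr ⟨h1, h2⟩, .inr ⟨h2, h1⟩, .inl ⟨h2, h1⟩]
  · rintro (⟨h1, h2⟩ | ⟨h1, h2⟩)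
    exacts [⟨a, b, c, d, rfl, rfl, h1, h2⟩, ⟨a, b, d, c, rfl, Sym2.eq_swap, h1, h2⟩]

lemma exists_mem_arcBtw_of_crosses {a b : ZMod N} {q : Sym2 (ZMod N)}
    (h : Crosses s(a, b) q) : ∃ c ∈ q, ArcBtw a b c := by
  induction q using Sym2.inductionOn with
  | hf c d =>
    rcases crosses_iff.mp h with ⟨hc, -⟩ | ⟨hd, -⟩
    exacts [⟨c, Sym2.mem_mk_left c d, hc⟩, ⟨d, Sym2.mem_mk_right c d, hd⟩]

variable [NeZero N]

lemma arcBtw_iff {a b x : ZMod N} : ArcBtw a b x ↔ 0 < arcLen a x ∧ arcLen a x < arcLen a b := by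
  constructor
  · rintro ⟨k, hk0, hk, rfl⟩
    rw [arcLen_add_natCast a (hk.trans (arcLen_lt a b))]
    exact ⟨hk0, hk⟩
  · rintro ⟨h0, h1⟩
    exact ⟨arcLen a x, h0, h1, eq_add_arcLen a x⟩

lemma arcBtw_add_right {a b x : ZMod N} (t : ZMod N) :
    ArcBtw (a + t) (b + t) (x + t) ↔ ArcBtw a b x := by
  simp only [arcBtw_iff, arcLen_add_right]

lemma isDiagonal_iff (hN : 2 < N) {a b : ZMod N} :
    IsDiagonal s(a, b) ↔ 2 ≤ arcLen a b ∧ 2 ≤ arcLen b a := by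
  have key : ∀ x y : ZMod N,
      (y ≠ x ∧ y ≠ x + 1 ∧ y ≠ x - 1) ↔ 2 ≤ arcLen x y ∧ 2 ≤ arcLen y x := by
    intro x y
    have h0 : y ≠ x ↔ 0 < arcLen x y ∧ 0 < arcLen y x := by
      rw [arcLen_pos_iff, arcLen_pos_iff, ne_comm, and_self]
    have h1 : y ≠ x + 1 ↔ arcLen x y ≠ 1 := (arcLen_eq_one_iff (by omega)).not.symm
    have h2 : y ≠ x - 1 ↔ arcLen y x ≠ 1 := by
      rw [ne_eq, ne_eq, arcLen_eq_one_iff (by omega), eq_sub_iff_add_eq, eq_comm]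
    rw [h0, h1, h2]
    omega
  simp only [IsDiagonal, key]
  exact Sym2.exists_mk_eq_and_iff (fun _ _ => And.symm) a b

lemma isAllowableDiagonal_iff {m : ℕ} (hN : 2 < N) {a b : ZMod N} :
    IsAllowableDiagonal m s(a, b) ↔
      2 ≤ arcLen a b ∧ 2 ≤ arcLen b a ∧ m ∣ arcLen a b - 1 ∧ m ∣ arcLen b a - 1 := by
  rw [IsAllowableDiagonal, isDiagonal_iff hN, mAllowable_iff, and_assoc]

lemma Crosses.symm {p q : Sym2 (ZMod N)} (h : Crosses p q) : Crosses q p := by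
  obtain ⟨a, b, c, d, rfl, rfl, hc, hd⟩ := h
  refine ⟨c, d, b, a, rfl, Sym2.eq_swap, ?_⟩
  rw [arcBtw_iff] at hc hd ⊢
  rw [arcBtw_iff]
  -- going around from `a`, the endpoints come in the order `c, b, d`
  have hab := arcLen_add_arcLen (arcLen_pos_iff.mp (by omega) : a ≠ b)
  have had : arcLen a d = arcLen a b + arcLen b d := arcLen_trans (by omega)
  have hcb : arcLen c b = arcLen a b - arcLen a c := arcLen_of_le hc.2.le
  have hcd : arcLen c d = arcLen a d - arcLen a c := arcLen_of_le (by omega)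
  have hdc := arcLen_add_arcLen (arcLen_pos_iff.mp (by omega) : c ≠ d)
  have hda := arcLen_add_arcLen (arcLen_pos_iff.mp (by omega) : a ≠ d)
  have := arcLen_lt a d
  omega

lemma not_crosses_self (p : Sym2 (ZMod N)) : ¬ Crosses p p := by
  induction p using Sym2.inductionOn with
  | hf a b =>
    rw [crosses_iff, arcBtw_iff, arcBtw_iff, arcBtw_iff, arcBtw_iff]
    simp only [arcLen_self]
    omega

end Polygon

lemma add_one_le_of_dvd_sub_one {m d : ℕ} (hd : 2 ≤ d) (hm : m ∣ d - 1) : m + 1 ≤ d := by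
  have := Nat.le_of_dvd (by omega) hm
  omega

lemma Sym2.map_add_map_neg {G : Type*} [AddGroup G] (t : G) (p : Sym2 G) :
    (p.map (· + t)).map (· + -t) = p := by
  simp [Sym2.map_map]

section Face

variable {N m : ℕ} {F : Finset (Sym2 (ZMod N))}

lemma IsAllowableDiagonal.map_add {p : Sym2 (ZMod N)} (t : ZMod N)
    (hp : IsAllowableDiagonal m p) : IsAllowableDiagonal m (p.map (· + t)) := by
  obtain ⟨⟨a, b, rfl, h1, h2, h3⟩, ⟨a', b', hab, h4, h5⟩⟩ := hp
  refine ⟨⟨a + t, b + t, rfl, ?_, ?_, ?_⟩, ⟨a' + t, b' + t, by rw [hab]; rfl, ?_, ?_⟩⟩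
  · exact fun h => h1 (by linear_combination h)
  · exact fun h => h2 (by linear_combination h)
  · exact fun h => h3 (by linear_combination h)
  · rwa [add_sub_add_right_eq_sub]
  · rwa [add_sub_add_right_eq_sub]

variable [NeZero N]

lemma IsFace.insert {p : Sym2 (ZMod N)} (hF : IsFace m F) (hp : IsAllowableDiagonal m p)
    (hpF : ∀ q ∈ F, ¬ Crosses p q) : IsFace m (insert p F) := by
  refine ⟨fun q hq => ?_, fun q hq r hr => ?_⟩
  · rcases Finset.mem_insert.mp hq with rfl | hqF
    exacts [hp, hF.1 q hqF]
  · rcases Finset.mem_insert.mp hq with rfl | hqF <;> rcases Finset.mem_insert.mp hr with rfl | hrF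
    exacts [not_crosses_self _, hpF r hrF, fun h => hpF q hqF h.symm, hF.2 q hqF r hrF]

lemma Maximal.mem_of_not_crosses {p : Sym2 (ZMod N)} (hF : Maximal (IsFace m) F)
    (hp : IsAllowableDiagonal m p) (hpF : ∀ q ∈ F, ¬ Crosses p q) : p ∈ F :=
  hF.2 (hF.1.insert hp hpF) (Finset.subset_insert p F) (Finset.mem_insert_self p F)

lemma IsFace.eq_empty_of_eq_add_two (hm : 1 ≤ m) (hN : N = m + 2) (hF : IsFace m F) : F = ∅ := by
  refine Finset.eq_empty_of_forall_notMem fun p hp => ?_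
  induction p using Sym2.inductionOn with
  | hf a b =>
    obtain ⟨h1, h2, h3, h4⟩ := (isAllowableDiagonal_iff (by omega)).mp (hF.1 _ hp)
    have := add_one_le_of_dvd_sub_one h1 h3
    have := add_one_le_of_dvd_sub_one h2 h4
    have := arcLen_add_arcLen (arcLen_pos_iff.mp (by omega) : a ≠ b)
    omega

lemma crosses_map_add_iff (t : ZMod N) {p q : Sym2 (ZMod N)} :
    Crosses (p.map (· + t)) (q.map (· + t)) ↔ Crosses p q := by
  induction p using Sym2.inductionOn with
  | hf a b =>
    induction q using Sym2.inductionOn with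
    | hf c d => simp only [Sym2.map_mk, crosses_iff, arcBtw_add_right]

lemma IsFace.image_map_add (t : ZMod N) (hF : IsFace m F) :
    IsFace m (F.image (Sym2.map (· + t))) := by
  refine ⟨fun p hp => ?_, fun p hp q hq => ?_⟩
  · obtain ⟨p, hpF, rfl⟩ := Finset.mem_image.mp hp
    exact IsAllowableDiagonal.map_add t (hF.1 p hpF)
  · obtain ⟨p, hpF, rfl⟩ := Finset.mem_image.mp hp
    obtain ⟨q, hqF, rfl⟩ := Finset.mem_image.mp hq
    rw [crosses_map_add_iff]
    exact hF.2 p hpF q hqF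

lemma Maximal.image_map_add (t : ZMod N) (hF : Maximal (IsFace m) F) :
    Maximal (IsFace m) (F.image (Sym2.map (· + t))) := by
  refine ⟨hF.1.image_map_add t, fun G hG hFG q hq => ?_⟩
  have hFG' : F ⊆ G.image (Sym2.map (· + -t)) := fun p hp =>
    Finset.mem_image.mpr ⟨_, hFG (Finset.mem_image_of_mem _ hp), Sym2.map_add_map_neg t p⟩
  have hq' := hF.2 (hG.image_map_add (-t)) hFG' (Finset.mem_image_of_mem _ hq)
  refine Finset.mem_image.mpr ⟨_, hq', ?_⟩
  simpa using Sym2.map_add_map_neg (-t) q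

end Face

section Ear

variable {N m : ℕ} {F : Finset (Sym2 (ZMod N))}

def ear (m : ℕ) : Sym2 (ZMod N) := s(0, ((m + 1 : ℕ) : ZMod N))

def OutsideEar (m : ℕ) (x : ZMod N) : Prop := ¬ ArcBtw 0 ((m + 1 : ℕ) : ZMod N) x

variable [NeZero N]

lemma exists_shortest (hF : F.Nonempty) :
    ∃ a b, s(a, b) ∈ F ∧ ∀ c d, s(c, d) ∈ F → arcLen a b ≤ arcLen c d := by
  obtain ⟨p, hp⟩ := hF
  induction p using Sym2.inductionOn with
  | hf x y =>
    obtain ⟨⟨a, b⟩, hab, hmin⟩ :=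
      Finset.exists_min_image (Finset.univ.filter fun x : ZMod N × ZMod N => s(x.1, x.2) ∈ F)
        (fun x => arcLen x.1 x.2) ⟨(x, y), by simpa using hp⟩
    exact ⟨a, b, by simpa using hab, fun c d hcd => hmin (c, d) (by simpa using hcd)⟩

lemma IsFace.not_arcBtw_of_shortest (hF : IsFace m F) {a b : ZMod N} (hab : s(a, b) ∈ F)
    (hmin : ∀ c d, s(c, d) ∈ F → arcLen a b ≤ arcLen c d) :
    ∀ p ∈ F, ∀ c ∈ p, ¬ ArcBtw a b c := by
  intro p hp c hc
  obtain ⟨e, rfl⟩ := Sym2.mem_iff_exists.mp hc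
  intro hcab
  have ⟨hac, hcb⟩ := arcBtw_iff.mp hcab
  rcases lt_trichotomy (arcLen a e) (arcLen a c) with hlt | heq | hgt
  · have := arcLen_of_le hlt.le
    have := hmin e c (Sym2.eq_swap ▸ hp)
    omega
  · obtain rfl := arcLen_injective a heq
    have := hmin e e hp
    simp only [arcLen_self] at this
    omega
  · by_cases heb : arcLen a e ≤ arcLen a b
    · have := arcLen_of_le hgt.le
      have := hmin c e hp
      omega
    · -- `e` lies beyond `b`, so `{c, e}` crosses `{a, b}`
      refine hF.2 _ hab _ hp (crosses_iff.mpr (.inl ⟨hcab, arcBtw_iff.mpr ?_⟩))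
      have := arcLen_of_le (not_le.mp heb).le
      have := arcLen_add_arcLen (arcLen_pos_iff.mp (by omega) : a ≠ b)
      have := arcLen_lt a e
      omega

lemma isAllowableDiagonal_mk_add (hm : 1 ≤ m) (hN : m + 3 ≤ N) (hmN : m ∣ N - 2) (a : ZMod N) :
    IsAllowableDiagonal m s(a, a + ((m + 1 : ℕ) : ZMod N)) := by
  have h1 : arcLen a (a + ((m + 1 : ℕ) : ZMod N)) = m + 1 := arcLen_add_natCast a (by omega)
  have h2 := arcLen_add_arcLen (arcLen_pos_iff.mp (by omega) : a ≠ a + ((m + 1 : ℕ) : ZMod N))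
  rw [isAllowableDiagonal_iff (by omega)]
  refine ⟨by omega, by omega, by rw [h1, Nat.add_sub_cancel], ?_⟩
  rw [show arcLen (a + ((m + 1 : ℕ) : ZMod N)) a - 1 = N - 2 - m by omega]
  exact Nat.dvd_sub hmN dvd_rfl

lemma Maximal.exists_ear (hm : 1 ≤ m) (hN : m + 3 ≤ N) (hmN : m ∣ N - 2)
    (hF : Maximal (IsFace m) F) :
    ∃ a : ZMod N, s(a, a + ((m + 1 : ℕ) : ZMod N)) ∈ F ∧
      ∀ p ∈ F, ∀ c ∈ p, ¬ ArcBtw a (a + ((m + 1 : ℕ) : ZMod N)) c := by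
  have hshort := isAllowableDiagonal_mk_add hm hN hmN
  have hne : F.Nonempty := by
    rcases F.eq_empty_or_nonempty with rfl | h
    · exact absurd (hF.mem_of_not_crosses (hshort 0) (by simp)) (Finset.notMem_empty _)
    · exact h
  obtain ⟨a, b, hab, hmin⟩ := exists_shortest hne
  have hinside := hF.1.not_arcBtw_of_shortest hab hmin
  obtain ⟨h1, -, h3, -⟩ := (isAllowableDiagonal_iff (by omega)).mp (hF.1.1 _ hab)
  have hlen : arcLen a (a + ((m + 1 : ℕ) : ZMod N)) = m + 1 := arcLen_add_natCast a (by omega)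
  suffices arcLen a b = m + 1 by
    rw [eq_add_arcLen a b, this] at hab hinside
    exact ⟨a, hab, hinside⟩
  -- otherwise `{a, a + (m + 1)}` would be a shorter diagonal of `F`
  by_contra hne
  have hlt : m + 1 < arcLen a b := lt_of_le_of_ne (add_one_le_of_dvd_sub_one h1 h3) (Ne.symm hne)
  have hmem := hF.mem_of_not_crosses (hshort a) fun q hq hcross => by
    obtain ⟨c, hc, hcarc⟩ := exists_mem_arcBtw_of_crosses hcross
    rw [arcBtw_iff, hlen] at hcarc
    exact hinside q hq c hc (arcBtw_iff.mpr ⟨hcarc.1, by omega⟩)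
  have := hmin _ _ hmem
  omega

lemma Maximal.exists_ear_at_zero (hm : 1 ≤ m) (hN : m + 3 ≤ N) (hmN : m ∣ N - 2)
    (hF : Maximal (IsFace m) F) :
    ∃ F₀ : Finset (Sym2 (ZMod N)), Maximal (IsFace m) F₀ ∧ F₀.card = F.card ∧ ear m ∈ F₀ ∧
      ∀ p ∈ F₀, ∀ c ∈ p, OutsideEar m c := by
  obtain ⟨a, hear, hinside⟩ := hF.exists_ear hm hN hmN
  refine ⟨F.image (Sym2.map (· + -a)), hF.image_map_add (-a),
    Finset.card_image_of_injective _ (Sym2.map.injective (add_left_injective _)), ?_, ?_⟩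
  · convert Finset.mem_image_of_mem _ hear using 1
    simp [ear]
  · intro p hp c hc harc
    obtain ⟨p, hpF, rfl⟩ := Finset.mem_image.mp hp
    obtain ⟨c, hcp, rfl⟩ := Sym2.mem_map.mp hc
    refine hinside p hpF c hcp ((arcBtw_add_right (-a)).mp ?_)
    convert harc using 1 <;> ring

end Ear

section Contraction

variable {m N N' : ℕ}

def contractEar (m N' : ℕ) (x : ZMod N) : ZMod N' :=
  if x.val ≤ m then 0 else ((x.val - m : ℕ) : ZMod N')

def expandEar (m N : ℕ) (y : ZMod N') : ZMod N :=
  if y.val = 0 then 0 else ((y.val + m : ℕ) : ZMod N)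

lemma val_expandEar [NeZero N'] (hNN : N = N' + m) (y : ZMod N') :
    (expandEar m N y).val = if y.val = 0 then 0 else y.val + m := by
  have := ZMod.val_lt y
  unfold expandEar
  split_ifs
  exacts [ZMod.val_zero, ZMod.val_cast_of_lt (by omega)]

variable [NeZero N]

lemma outsideEar_iff (h : m + 1 < N) {x : ZMod N} :
    OutsideEar m x ↔ x.val = 0 ∨ m + 1 ≤ x.val := by
  rw [OutsideEar, arcBtw_iff, arcLen_zero_left, arcLen_zero_left, ZMod.val_cast_of_lt h]
  omega

lemma val_contractEar (hNN : N = N' + m) (x : ZMod N) :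
    (contractEar m N' x).val = if x.val ≤ m then 0 else x.val - m := by
  have := ZMod.val_lt x
  unfold contractEar
  split_ifs
  exacts [ZMod.val_zero, ZMod.val_cast_of_lt (by omega)]

variable [NeZero N']

lemma outsideEar_expandEar (hNN : N = N' + m) (hN' : 1 < N') (y : ZMod N') :
    OutsideEar m (expandEar m N y) := by
  rw [outsideEar_iff (by omega), val_expandEar hNN]
  split_ifs <;> omega

lemma expandEar_contractEar (hNN : N = N' + m) (hN' : 1 < N') {x : ZMod N}
    (hx : OutsideEar m x) : expandEar m N (contractEar m N' x) = x := by
  rw [outsideEar_iff (by omega)] at hx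
  apply ZMod.val_injective
  rw [val_expandEar hNN, val_contractEar hNN]
  split_ifs <;> omega

lemma contractEar_expandEar (hNN : N = N' + m) (y : ZMod N') :
    contractEar m N' (expandEar m N y) = y := by
  apply ZMod.val_injective
  rw [val_contractEar hNN, val_expandEar hNN]
  split_ifs <;> omega

lemma arcBtw_contractEar_iff (hNN : N = N' + m) (hN' : 1 < N') {x y z : ZMod N}
    (hx : OutsideEar m x) (hy : OutsideEar m y) (hz : OutsideEar m z) :
    ArcBtw (contractEar m N' x) (contractEar m N' y) (contractEar m N' z) ↔ ArcBtw x y z := by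
  rw [outsideEar_iff (by omega)] at hx hy hz
  have := ZMod.val_lt x
  have := ZMod.val_lt y
  have := ZMod.val_lt z
  simp only [arcBtw_iff, arcLen_eq_ite, val_contractEar hNN]
  split_ifs <;> omega

lemma crosses_map_contractEar_iff (hNN : N = N' + m) (hN' : 1 < N') {p q : Sym2 (ZMod N)}
    (hp : ∀ x ∈ p, OutsideEar m x) (hq : ∀ x ∈ q, OutsideEar m x) :
    Crosses (p.map (contractEar m N')) (q.map (contractEar m N')) ↔ Crosses p q := by
  induction p using Sym2.inductionOn with
  | hf a b =>
    induction q using Sym2.inductionOn with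
    | hf c d =>
      simp only [Sym2.mem_iff, forall_eq_or_imp, forall_eq] at hp hq
      simp only [Sym2.map_mk, crosses_iff,
        arcBtw_contractEar_iff hNN hN' hp.1 hp.2 hq.1, arcBtw_contractEar_iff hNN hN' hp.1 hp.2 hq.2,
        arcBtw_contractEar_iff hNN hN' hp.2 hp.1 hq.1, arcBtw_contractEar_iff hNN hN' hp.2 hp.1 hq.2]

/-- `hpass` says that the arc from `x` to `y` runs over the collapsed vertices `1, …, m`. -/
lemma arcLen_contractEar_of_passes (hNN : N = N' + m) (hN' : 1 < N') {x y : ZMod N}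
    (hy : OutsideEar m y) (hxy : x ≠ y) (hpass : x.val = 0 ∨ (0 < y.val ∧ y.val < x.val)) :
    arcLen (contractEar m N' x) (contractEar m N' y) + m = arcLen x y ∧
      arcLen (contractEar m N' y) (contractEar m N' x) = arcLen y x ∧
      (arcLen x y ≤ m + 1 → s(x, y) = ear m) := by
  rw [outsideEar_iff (by omega)] at hy
  have := ZMod.val_lt x
  have := ZMod.val_lt y
  have hval : x.val ≠ y.val := fun h => hxy (ZMod.val_injective N h)
  refine ⟨?_, ?_, fun hlen => ?_⟩
  · simp only [arcLen_eq_ite, val_contractEar hNN]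
    split_ifs <;> omega
  · simp only [arcLen_eq_ite, val_contractEar hNN]
    split_ifs <;> omega
  · rw [arcLen_eq_ite] at hlen
    have hx0 : x.val = 0 := by split_ifs at hlen <;> omega
    have hy0 : y.val = m + 1 := by split_ifs at hlen <;> omega
    rw [ear, (ZMod.val_eq_zero x).mp hx0, ← hy0, ZMod.natCast_zmod_val]

end Contraction

section ContractFace

variable {m N N' : ℕ} [NeZero N] [NeZero N'] {F : Finset (Sym2 (ZMod N))}

lemma map_contractEar_ear (hNN : N = N' + m) (hN' : 1 < N') :
    (ear m : Sym2 (ZMod N)).map (contractEar m N') = s(0, 1) := by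
  have hval : ((m + 1 : ℕ) : ZMod N).val = m + 1 := ZMod.val_cast_of_lt (by omega)
  simp only [ear, Sym2.map_mk]
  congr 1 <;> apply ZMod.val_injective
  · rw [val_contractEar hNN, ZMod.val_zero, ZMod.val_zero, if_pos (Nat.zero_le m)]
  · rw [val_contractEar hNN, hval, if_neg (by omega), ZMod.val_one_eq_one_mod,
      Nat.mod_eq_of_lt hN']
    omega

lemma isAllowableDiagonal_contractEar_iff_of_passes (hNN : N = N' + m) (hN' : 2 < N')
    {x y : ZMod N} (hy : OutsideEar m y) (hxy : x ≠ y)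
    (hpass : x.val = 0 ∨ (0 < y.val ∧ y.val < x.val)) (hne : s(x, y) ≠ ear m) :
    IsAllowableDiagonal m s(contractEar m N' x, contractEar m N' y) ↔
      IsAllowableDiagonal m s(x, y) := by
  obtain ⟨hL, hR, hear⟩ := arcLen_contractEar_of_passes hNN (by omega) hy hxy hpass
  have hlong : m + 2 ≤ arcLen x y := by
    by_contra h
    exact hne (hear (by omega))
  rw [isAllowableDiagonal_iff hN', isAllowableDiagonal_iff (by omega), hR,
    show arcLen x y - 1 = arcLen (contractEar m N' x) (contractEar m N' y) - 1 + m by omega,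
    Nat.dvd_add_self_right]
  constructor <;> rintro ⟨h1, h2, h3, h4⟩ <;> exact ⟨by omega, h2, h3, h4⟩

lemma isAllowableDiagonal_map_contractEar_iff (hNN : N = N' + m) (hN' : 2 < N')
    {p : Sym2 (ZMod N)} (hp : ∀ x ∈ p, OutsideEar m x) :
    IsAllowableDiagonal m (p.map (contractEar m N')) ↔ IsAllowableDiagonal m p ∧ p ≠ ear m := by
  by_cases hear : p = ear m
  · rw [hear, map_contractEar_ear hNN (by omega), isAllowableDiagonal_iff hN', arcLen_zero_left,
      ZMod.val_one_eq_one_mod, Nat.mod_eq_of_lt (by omega)]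
    simp
  rw [and_iff_left hear]
  induction p using Sym2.inductionOn with
  | hf x y =>
    rw [Sym2.map_mk]
    rcases eq_or_ne x y with rfl | hxy
    · simp [isAllowableDiagonal_iff hN', isAllowableDiagonal_iff (show 2 < N by omega)]
    have hval : x.val ≠ y.val := fun h => hxy (ZMod.val_injective N h)
    rcases (by omega : (x.val = 0 ∨ (0 < y.val ∧ y.val < x.val)) ∨
        (y.val = 0 ∨ (0 < x.val ∧ x.val < y.val))) with hpass | hpass
    · exact isAllowableDiagonal_contractEar_iff_of_passes hNN hN' (hp y (Sym2.mem_mk_right x y))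
        hxy hpass hear
    · rw [Sym2.eq_swap, Sym2.eq_swap (a := x)]
      exact isAllowableDiagonal_contractEar_iff_of_passes hNN hN' (hp x (Sym2.mem_mk_left x y))
        hxy.symm hpass (by rwa [Sym2.eq_swap])

lemma map_expandEar_map_contractEar (hNN : N = N' + m) (hN' : 1 < N') {p : Sym2 (ZMod N)}
    (hp : ∀ x ∈ p, OutsideEar m x) : (p.map (contractEar m N')).map (expandEar m N) = p := by
  rw [Sym2.map_map, Sym2.map_congr (f := expandEar m N ∘ contractEar m N') (g := id)
    fun x hx => expandEar_contractEar hNN hN' (hp x hx),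
    Sym2.map_id, id]

lemma map_contractEar_map_expandEar (hNN : N = N' + m) (q : Sym2 (ZMod N')) :
    (q.map (expandEar m N)).map (contractEar m N') = q := by
  rw [Sym2.map_map, Sym2.map_congr (f := contractEar m N' ∘ expandEar m N) (g := id)
    fun y _ => contractEar_expandEar hNN y,
    Sym2.map_id, id]

def contractFace (m N' : ℕ) (F : Finset (Sym2 (ZMod N))) : Finset (Sym2 (ZMod N')) :=
  (F.erase (ear m)).image (Sym2.map (contractEar m N'))

lemma IsFace.contractFace (hNN : N = N' + m) (hN' : 2 < N') (hF : IsFace m F)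
    (hout : ∀ p ∈ F, ∀ x ∈ p, OutsideEar m x) : IsFace m (contractFace m N' F) := by
  refine ⟨fun q hq => ?_, fun q hq r hr => ?_⟩
  · obtain ⟨p, hp, rfl⟩ := Finset.mem_image.mp hq
    obtain ⟨hpe, hpF⟩ := Finset.mem_erase.mp hp
    exact (isAllowableDiagonal_map_contractEar_iff hNN hN' (hout p hpF)).mpr ⟨hF.1 p hpF, hpe⟩
  · obtain ⟨p, hp, rfl⟩ := Finset.mem_image.mp hq
    obtain ⟨r', hr', rfl⟩ := Finset.mem_image.mp hr
    have hpF := Finset.mem_of_mem_erase hp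
    have hrF := Finset.mem_of_mem_erase hr'
    rw [crosses_map_contractEar_iff hNN (by omega) (hout p hpF) (hout r' hrF)]
    exact hF.2 p hpF r' hrF

lemma card_contractFace (hNN : N = N' + m) (hN' : 1 < N') (hear : ear m ∈ F)
    (hout : ∀ p ∈ F, ∀ x ∈ p, OutsideEar m x) : (contractFace m N' F).card + 1 = F.card := by
  rw [contractFace, Finset.card_image_of_injOn, Finset.card_erase_add_one hear]
  intro p hp q hq hpq
  have := congrArg (Sym2.map (expandEar m N)) hpq
  rwa [map_expandEar_map_contractEar hNN hN' (hout p (Finset.mem_of_mem_erase hp)),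
    map_expandEar_map_contractEar hNN hN' (hout q (Finset.mem_of_mem_erase hq))] at this

lemma Maximal.contractFace (hNN : N = N' + m) (hN' : 2 < N') (hF : Maximal (IsFace m) F)
    (hout : ∀ p ∈ F, ∀ x ∈ p, OutsideEar m x) : Maximal (IsFace m) (contractFace m N' F) := by
  refine ⟨hF.1.contractFace hNN hN' hout, fun G hG hsub q hq => ?_⟩
  set p := q.map (expandEar m N)
  have hp : ∀ x ∈ p, OutsideEar m x := fun x hx => by
    obtain ⟨y, -, rfl⟩ := Sym2.mem_map.mp hx
    exact outsideEar_expandEar hNN (by omega) y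
  have hpq : p.map (contractEar m N') = q := map_contractEar_map_expandEar hNN q
  obtain ⟨hpAD, hpe⟩ :=
    (isAllowableDiagonal_map_contractEar_iff hNN hN' hp).mp (hpq ▸ hG.1 q hq)
  have hpF : p ∈ F := hF.mem_of_not_crosses hpAD fun r hr hcross => by
    by_cases hre : r = ear m
    · subst hre
      obtain ⟨x, hx, harc⟩ := exists_mem_arcBtw_of_crosses (hcross.symm : Crosses s(0, _) p)
      exact hp x hx harc
    · have hrG := hsub (Finset.mem_image_of_mem _ (Finset.mem_erase.mpr ⟨hre, hr⟩))
      refine hG.2 q hq _ hrG ?_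
      rwa [← hpq, crosses_map_contractEar_iff hNN (by omega) hp (hout r hr)]
  exact Finset.mem_image.mpr ⟨p, Finset.mem_erase.mpr ⟨hpe, hpF⟩, hpq⟩

end ContractFace

theorem card_eq_of_maximal_isFace {m : ℕ} (hm : 1 ≤ m) (n : ℕ)
    (F : Finset (Sym2 (ZMod ((n + 1) * m + 2)))) (hF : Maximal (IsFace m) F) : F.card = n := by
  induction n with
  | zero => rw [hF.1.eq_empty_of_eq_add_two hm (by ring), Finset.card_empty]
  | succ n ih =>
    have hNN : (n + 1 + 1) * m + 2 = (n + 1) * m + 2 + m := by ring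
    obtain ⟨F₀, hF₀, hcard, hear, hout⟩ :=
      hF.exists_ear_at_zero hm (by nlinarith) ⟨n + 1 + 1, by rw [Nat.add_sub_cancel, mul_comm]⟩
    rw [← hcard, ← card_contractFace hNN (by nlinarith) hear hout,
      ih _ (hF₀.contractFace hNN (by nlinarith) hout)]

theorem generalized_cluster_complex_A_pure_general (n m : ℕ) (hm : 1 ≤ m)
    (F : Finset (Sym2 (ZMod ((n + 1) * m + 2)))) (hF : IsFace m F)
    (hmax : ∀ G : Finset (Sym2 (ZMod ((n + 1) * m + 2))), IsFace m G → F ⊆ G → F = G) :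
    F.card = n :=
  card_eq_of_maximal_isFace hm n F ⟨hF, fun G hG hFG => (hmax G hG hFG).ge⟩

/-- Every set of pairwise noncrossing `m`-allowable diagonals of the convex
`((n+1)m+2)`-gon that is maximal with respect to inclusion has exactly `n`
elements: the complex `Δ(m, n)` is pure of dimension `n - 1`. -/
theorem generalized_cluster_complex_A_pure (n m : ℕ) (hn : 1 ≤ n) (hm : 1 ≤ m)
    (F : Finset (Sym2 (ZMod ((n + 1) * m + 2)))) (hF : IsFace m F)
    (hmax : ∀ G : Finset (Sym2 (ZMod ((n + 1) * m + 2))), IsFace m G → F ⊆ G → F = G) :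
    F.card = n :=
  generalized_cluster_complex_A_pure_general n m hm F hF hmax
end

section
/- For all integers n ≥ 1 and m ≥ 1, one has Σ_{k=0}^{n} (−1)^{n−k} f^A_k(n,m) = (1/(n+1))·C((n+1)m, n); that is, the reduced Euler characteristic of Δ^m(A_n) equals (−1)^{n−1} times the number of maximal simplices of Δ^{m−1}(A_n). -/
open Finset

/-- The binomial coefficient `C(a, b)` for integers `a, b`, with the convention
that it vanishes unless `0 ≤ b ≤ a`. -/
def cc (a b : ℤ) : ℚ :=
  if 0 ≤ b ∧ b ≤ a then (a.toNat.choose b.toNat : ℚ) else 0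

/-- The type-A face numbers `f^A_k(n, m) = (1/(k+1))·C(n,k)·C((n+1)m+k+1, k)`:
the number of `k`-element faces of the generalized cluster complex `Δ^m(A_n)`. -/
def fA (n m k : ℕ) : ℚ :=
  1 / ((k : ℚ) + 1) * cc n k * cc (((n : ℤ) + 1) * m + k + 1) k

/-- The type-B face numbers `f^B_k(n, m) = C(n,k)·C(nm+k, k)`:
the number of `k`-element faces of the generalized cluster complex `Δ^m(B_n)`. -/
def fB (n m k : ℕ) : ℚ :=
  cc n k * cc ((n : ℤ) * m + k) k

/-- The type-D face numbers
`f^D_k(n, m) = C(n,k)·C((n-1)m+k, k) + C(n-2,k-2)·C((n-1)m+k-1, k)`: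
the number of `k`-element faces of the generalized cluster complex `Δ^m(D_n)`. -/
def fD (n m k : ℕ) : ℚ :=
  cc n k * cc (((n : ℤ) - 1) * m + k) k
    + cc ((n : ℤ) - 2) ((k : ℤ) - 2) * cc (((n : ℤ) - 1) * m + k - 1) k

/-!
With `M = (n+1)m`, the identity `C(n,k)/(k+1) = C(n+1,k+1)/(n+1)` and the symmetry
`C(M+k+1, k) = C(M+k+1, M+1)` turn the alternating sum into `1/(n+1)` times the
`(n+1)`-st forward difference of `x ↦ C(x, M+1)` at `x = M`. Since `Δ C(x, r+1) = C(x, r)`,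
that difference is `C(M, M-n) = C(M, n)`.
-/

theorem cc_natCast (a b : ℕ) : cc a b = a.choose b := by
  unfold cc
  split_ifs with h
  · simp
  · rw [Nat.choose_eq_zero_of_lt (by omega), Nat.cast_zero]

theorem sum_range_alternating_choose_mul_choose_add (N j y : ℕ) :
    ∑ k ∈ range (N + 1), (-1 : ℤ) ^ (N - k) * N.choose k * (y + k).choose (N + j)
      = y.choose j := by
  have h := fwdDiff_iter_eq_sum_shift (1 : ℕ) (fun x ↦ x.choose (N + j) : ℕ → ℤ) N y
  rw [fwdDiff_iter_choose] at h
  simpa using h.symm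

theorem fA_eq_choose_mul_choose_div (n m k : ℕ) :
    fA n m k = (n + 1).choose (k + 1) * ((n + 1) * m + (k + 1)).choose ((n + 1) * m + 1)
      / ((n : ℚ) + 1) := by
  have hcast : ((n : ℤ) + 1) * m + k + 1 = (((n + 1) * m + 1 + k : ℕ) : ℤ) := by
    push_cast; ring
  have hpascal : ((n : ℚ) + 1) * n.choose k = (n + 1).choose (k + 1) * ((k : ℚ) + 1) := by
    exact_mod_cast Nat.add_one_mul_choose_eq n k
  rw [fA, hcast, cc_natCast, cc_natCast, ← Nat.choose_symm_add,
    show (n + 1) * m + 1 + k = (n + 1) * m + (k + 1) by ring]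
  field_simp
  linear_combination ((((n + 1) * m + (k + 1)).choose ((n + 1) * m + 1) : ℕ) : ℚ) * hpascal

theorem euler_characteristic_type_A_general (n m : ℕ) (hm : 1 ≤ m) :
    ∑ k ∈ Finset.range (n + 1), (-1 : ℚ) ^ (n - k) * fA n m k
      = 1 / ((n : ℚ) + 1) * cc (((n : ℤ) + 1) * m) n := by
  set M := (n + 1) * m
  have hnM : n ≤ M := by have := Nat.le_mul_of_pos_right (n + 1) hm; omega
  have hdiff := sum_range_alternating_choose_mul_choose_add (n + 1) (M - n) M
  rw [sum_range_succ', Nat.choose_eq_zero_of_lt (by omega : M + 0 < n + 1 + (M - n)),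
    Nat.cast_zero, mul_zero, add_zero, Nat.choose_symm hnM] at hdiff
  have hM : ((n : ℤ) + 1) * m = (M : ℤ) := by push_cast [M]; ring
  rw [hM, cc_natCast, ← Int.cast_natCast (M.choose n), ← hdiff, Int.cast_sum, mul_sum]
  refine sum_congr rfl fun k _ ↦ ?_
  rw [fA_eq_choose_mul_choose_div, show n + 1 - (k + 1) = n - k by omega,
    show n + 1 + (M - n) = M + 1 by omega]
  push_cast
  ring

/-- `Σ_{k=0}^{n} (−1)^{n−k} f^A_k(n,m) = (1/(n+1))·C((n+1)m, n)`: the reduced Euler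
characteristic of `Δ^m(A_n)` equals `(−1)^{n−1}` times the number of maximal
simplices of `Δ^{m−1}(A_n)`. -/
theorem euler_characteristic_type_A (n m : ℕ) (hn : 1 ≤ n) (hm : 1 ≤ m) :
    ∑ k ∈ Finset.range (n + 1), (-1 : ℚ) ^ (n - k) * fA n m k
      = 1 / ((n : ℚ) + 1) * cc (((n : ℤ) + 1) * m) n :=
  euler_characteristic_type_A_general n m hm
end

section
/- For all integers n ≥ 1, m ≥ 1 and 1 ≤ k ≤ n, the type-A face numbers satisfy the recurrence 2k·f^A_k(n,m) = ((n+1)m+2) · Σ_{i=1}^{n} Σ_{k₁+k₂=k−1, k₁,k₂ ≥ 0} f^A_{k₁}(i−1, m)·f^A_{k₂}(n−i, m). -/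
open Finset

open Polynomial PowerSeries

namespace FaceGF
noncomputable section

abbrev A : Type := PowerSeries ℚ
abbrev B : Type := PowerSeries A

def t : A := PowerSeries.X

/-- Evaluation of a polynomial over `A` at an element of `B`, with coefficients
embedded as constants. -/
def pev (b : B) (p : Polynomial A) : B := Polynomial.eval₂ (PowerSeries.C (R := A)) b p

/-- `φ(w) = (1+tw)^m (1+(1+t)w)` as a polynomial in `w` over `A = ℚ[[t]]`. -/
def phi (m : ℕ) : Polynomial A :=
  (1 + Polynomial.C t * Polynomial.X) ^ m * (1 + Polynomial.C (1 + t) * Polynomial.X)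

/-- Agreement of coefficients below `N`. -/
def AB (N : ℕ) (f g : B) : Prop := ∀ i < N, PowerSeries.coeff (R := A) i f = PowerSeries.coeff (R := A) i g

lemma AB.mul {N : ℕ} {a b c d : B} (h1 : AB N a b) (h2 : AB N c d) : AB N (a * c) (b * d) := by
  intro i hi
  rw [PowerSeries.coeff_mul, PowerSeries.coeff_mul]
  refine Finset.sum_congr rfl fun p hp => ?_
  rw [Finset.HasAntidiagonal.mem_antidiagonal] at hp
  have h1' : p.1 < N := lt_of_le_of_lt (hp ▸ Nat.le_add_right _ _) hi
  have h2' : p.2 < N := lt_of_le_of_lt (hp ▸ Nat.le_add_left _ _) hi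
  rw [h1 _ h1', h2 _ h2']

lemma AB.pow {N : ℕ} {a b : B} (h : AB N a b) (r : ℕ) : AB N (a ^ r) (b ^ r) := by
  induction r with
  | zero => intro i _; rw [pow_zero, pow_zero]
  | succ r ih => rw [pow_succ, pow_succ]; exact ih.mul h

lemma pev_congr {N : ℕ} {a b : B} (h : AB N a b) (p : Polynomial A) :
    AB N (pev a p) (pev b p) := by
  induction p using Polynomial.induction_on' with
  | add p q hp hq =>
    intro i hi
    unfold FaceGF.pev at *
    rw [Polynomial.eval₂_add, Polynomial.eval₂_add]
    simp only [map_add]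
    rw [hp i hi, hq i hi]
  | monomial e c =>
    intro i hi
    unfold FaceGF.pev
    rw [Polynomial.eval₂_monomial, Polynomial.eval₂_monomial]
    exact (AB.mul (fun j _ => rfl) (h.pow e)) i hi

def seq (m : ℕ) : ℕ → B
  | 0 => 0
  | n + 1 => PowerSeries.X * pev (seq m n) (phi m)

lemma AB.step {m N : ℕ} {a b : B} (h : AB N a b) :
    AB (N + 1) (PowerSeries.X * pev a (phi m)) (PowerSeries.X * pev b (phi m)) := by
  intro i hi
  cases i with
  | zero => rw [PowerSeries.coeff_zero_X_mul, PowerSeries.coeff_zero_X_mul]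
  | succ j =>
    rw [PowerSeries.coeff_succ_X_mul, PowerSeries.coeff_succ_X_mul]
    exact (pev_congr h (phi m)) j (by omega)

lemma seq_ab (m : ℕ) : ∀ n, AB n (seq m n) (seq m (n + 1))
  | 0 => fun i hi => absurd hi (Nat.not_lt_zero i)
  | n + 1 => AB.step (seq_ab m n)

lemma seq_stable (m : ℕ) {i n n' : ℕ} (h : i < n) (h' : n ≤ n') :
    PowerSeries.coeff (R := A) i (seq m n) = PowerSeries.coeff (R := A) i (seq m n') := by
  induction n' with
  | zero => omega
  | succ n' ih =>
    rcases Nat.lt_or_ge n (n' + 1) with hlt | hge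
    · have hin : i < n' := by omega
      rw [ih (by omega), seq_ab m n' i hin]
    · have : n = n' + 1 := by omega
      subst this; rfl

def u (m : ℕ) : B := PowerSeries.mk fun N => PowerSeries.coeff (R := A) N (seq m (N + 1))

lemma coeff_u (m N : ℕ) : PowerSeries.coeff (R := A) N (u m) = PowerSeries.coeff (R := A) N (seq m (N + 1)) :=
  PowerSeries.coeff_mk _ _

lemma ab_seq_u (m n : ℕ) : AB n (seq m n) (u m) := by
  intro i hi
  rw [coeff_u]
  exact (seq_stable m (Nat.lt_succ_self i) hi).symm

lemma u_eq (m : ℕ) : u m = PowerSeries.X * pev (u m) (phi m) := by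
  apply PowerSeries.ext
  intro N
  rw [coeff_u]
  show PowerSeries.coeff (R := A) N (seq m (N + 1)) = _
  have : AB (N + 1) (seq m (N + 1)) (PowerSeries.X * pev (u m) (phi m)) := by
    show AB (N + 1) (PowerSeries.X * pev (seq m N) (phi m)) _
    exact AB.step (ab_seq_u m N)
  exact this N (Nat.lt_succ_self N)

lemma constantCoeff_u (m : ℕ) : PowerSeries.coeff (R := A) 0 (u m) = 0 := by
  rw [u_eq m, PowerSeries.coeff_zero_X_mul]

lemma coeff_u_pow_eq_zero (m : ℕ) {r N : ℕ} (h : N < r) :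
    PowerSeries.coeff (R := A) N (u m ^ r) = 0 := by
  induction r generalizing N with
  | zero => omega
  | succ r ih =>
    rw [pow_succ, PowerSeries.coeff_mul]
    refine Finset.sum_eq_zero fun p hp => ?_
    rw [Finset.HasAntidiagonal.mem_antidiagonal] at hp
    rcases Nat.eq_zero_or_pos p.2 with h0 | h0
    · rw [h0, constantCoeff_u, mul_zero]
    · rw [ih (show p.1 < r by omega), zero_mul]

lemma natCast_ne_zero_A {k : ℕ} (hk : k ≠ 0) : (k : A) ≠ 0 := by
  intro h
  have := congrArg (PowerSeries.constantCoeff (R := ℚ)) h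
  rw [map_natCast, map_zero] at this
  exact hk (by exact_mod_cast this)

lemma masterU (m : ℕ) : ∀ N r : ℕ, 1 ≤ r → r ≤ N →
    (N : A) * PowerSeries.coeff (R := A) N (u m ^ r) = (r : A) * (phi m ^ N).coeff (N - r) := by
  intro N
  induction N using Nat.strong_induction_on with
  | _ N IH =>
  intro r hr1 hrN
  have hu : u m ^ r = PowerSeries.X ^ r * pev (u m) (phi m ^ r) := by
    conv_lhs => rw [u_eq m]
    rw [mul_pow]
    unfold FaceGF.pev
    rw [Polynomial.eval₂_pow]
  have hN : N - r + r = N := Nat.sub_add_cancel hrN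
  set M := N - r with hM
  have hcoeff : PowerSeries.coeff (R := A) N (u m ^ r)
      = ∑ i ∈ range ((phi m ^ r).natDegree + 1),
          (phi m ^ r).coeff i * PowerSeries.coeff (R := A) M (u m ^ i) := by
    rw [hu]
    unfold FaceGF.pev
    rw [Polynomial.eval₂_eq_sum_range, ← hN, PowerSeries.coeff_X_pow_mul, map_sum]
    refine Finset.sum_congr rfl fun i _ => ?_
    rw [PowerSeries.coeff_C_mul]
  rcases eq_or_lt_of_le hrN with hrNeq | hrlt
  · -- r = N, M = 0
    have hM0 : M = 0 := by omega
    rw [hcoeff, hM0]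
    rw [Finset.sum_eq_single 0]
    · rw [pow_zero, PowerSeries.coeff_zero_one, mul_one, hrNeq]
    · intro b _ hb
      rw [coeff_u_pow_eq_zero m (Nat.pos_of_ne_zero hb), mul_zero]
    · intro h; exact absurd (Finset.mem_range.mpr (Nat.succ_pos _)) h
  · -- r < N, M ≥ 1
    have hM1 : 1 ≤ M := by omega
    have hMN : M < N := by omega
    have hS : PowerSeries.coeff (R := A) N (u m ^ r)
        = ∑ i ∈ range (M + 1), (phi m ^ r).coeff i * PowerSeries.coeff (R := A) M (u m ^ i) := by
      rw [hcoeff]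
      set D := (phi m ^ r).natDegree + 1
      rw [show (∑ i ∈ range D, (phi m ^ r).coeff i * PowerSeries.coeff (R := A) M (u m ^ i))
          = ∑ i ∈ range (max D (M + 1)), (phi m ^ r).coeff i * PowerSeries.coeff (R := A) M (u m ^ i) from
        Finset.sum_subset (Finset.range_subset_range.mpr (le_max_left _ _)) (fun x _ hx => by
          rw [Polynomial.coeff_eq_zero_of_natDegree_lt, zero_mul]
          have := Finset.mem_range.not.mp hx
          omega)]
      exact (Finset.sum_subset (Finset.range_subset_range.mpr (le_max_right _ _)) (fun x _ hx => by
        rw [coeff_u_pow_eq_zero m (show M < x by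
          have := Finset.mem_range.not.mp hx; omega), mul_zero])).symm
    have key : (M : A) * PowerSeries.coeff (R := A) N (u m ^ r)
        = (r : A) * ((phi m ^ (N - 1)) * derivative (phi m)).coeff (M - 1) := by
      rw [hS, Finset.mul_sum]
      have step : ∀ i ∈ range (M + 1),
          (M : A) * ((phi m ^ r).coeff i * PowerSeries.coeff (R := A) M (u m ^ i))
          = (phi m ^ r).coeff i * ((i : A) * (phi m ^ M).coeff (M - i)) := by
        intro i hi
        rcases Nat.eq_zero_or_pos i with h0 | h0
        · rw [h0, pow_zero,
            show PowerSeries.coeff (R := A) M (1 : B) = 0 from by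
              rw [PowerSeries.coeff_one, if_neg (by omega)]]
          simp
        · have h' := IH M hMN i h0 (by have := Finset.mem_range.mp hi; omega)
          calc (M : A) * ((phi m ^ r).coeff i * PowerSeries.coeff (R := A) M (u m ^ i))
              = (phi m ^ r).coeff i * ((M : A) * PowerSeries.coeff (R := A) M (u m ^ i)) := by ring
            _ = (phi m ^ r).coeff i * ((i : A) * (phi m ^ M).coeff (M - i)) := by rw [h']
      rw [Finset.sum_congr rfl step]
      have hterm : ∀ j : ℕ, (derivative (phi m ^ r)).coeff j
          = (phi m ^ r).coeff (j + 1) * (((j : A)) + 1) := by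
        intro j
        rw [Polynomial.coeff_derivative]
      rw [Finset.sum_range_succ']
      simp only [Nat.cast_zero, zero_mul, mul_zero, add_zero]
      calc (∑ j ∈ range M, (phi m ^ r).coeff (j + 1) * (((j + 1 : ℕ) : A) * (phi m ^ M).coeff (M - (j + 1))))
          = ∑ j ∈ range M, (derivative (phi m ^ r)).coeff j * (phi m ^ M).coeff (M - 1 - j) := by
            refine Finset.sum_congr rfl fun j _ => ?_
            rw [hterm j, show M - (j + 1) = M - 1 - j by omega]
            push_cast
            ring
        _ = (derivative (phi m ^ r) * phi m ^ M).coeff (M - 1) := by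
            rw [Polynomial.coeff_mul, Finset.Nat.sum_antidiagonal_eq_sum_range_succ_mk,
              show (M - 1).succ = M by omega]
        _ = (r : A) * ((phi m ^ (N - 1)) * derivative (phi m)).coeff (M - 1) := by
            rw [Polynomial.derivative_pow]
            rw [show Polynomial.C ((r : ℕ) : A) * phi m ^ (r - 1) * derivative (phi m) * phi m ^ M
              = Polynomial.C ((r : ℕ) : A) * (phi m ^ (N - 1) * derivative (phi m)) by
                rw [show (N - 1) = (r - 1) + M by omega, pow_add]; ring]
            rw [Polynomial.coeff_C_mul]
    have key2 : (M : A) * ((r : A) * (phi m ^ N).coeff M)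
        = (r : A) * ((N : A) * ((phi m ^ (N - 1)) * derivative (phi m)).coeff (M - 1)) := by
      have hc : ((M - 1 : ℕ) : A) + 1 = (M : A) := by
        rw [← Nat.cast_add_one]
        exact congrArg _ (by omega)
      have hd : (derivative (phi m ^ N)).coeff (M - 1) = (phi m ^ N).coeff M * (M : A) := by
        rw [Polynomial.coeff_derivative, show M - 1 + 1 = M by omega, hc]
      have hd2 : derivative (phi m ^ N)
          = Polynomial.C ((N : ℕ) : A) * (phi m ^ (N - 1) * derivative (phi m)) := by
        rw [Polynomial.derivative_pow]; ring
      rw [hd2, Polynomial.coeff_C_mul] at hd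
      linear_combination (-(r : A)) * hd
    apply mul_left_cancel₀ (natCast_ne_zero_A (show M ≠ 0 by omega))
    linear_combination (N : A) * key - key2

lemma coeff_one_add_CX_pow (c : A) : ∀ (P : ℕ) (e : ℕ),
    ((1 + Polynomial.C c * Polynomial.X) ^ P).coeff e = (P.choose e : A) * c ^ e := by
  intro P
  induction P with
  | zero =>
    intro e
    cases e with
    | zero => simp
    | succ e => simp [Polynomial.coeff_one]
  | succ P ih =>
    intro e
    have expand : (1 + Polynomial.C c * Polynomial.X) ^ (P + 1)
        = (1 + Polynomial.C c * Polynomial.X) ^ P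
          + Polynomial.X * (Polynomial.C c * (1 + Polynomial.C c * Polynomial.X) ^ P) := by
      rw [pow_succ]; ring
    rw [expand, Polynomial.coeff_add]
    cases e with
    | zero => rw [Polynomial.coeff_X_mul_zero, ih]; simp
    | succ e =>
      rw [Polynomial.coeff_X_mul, Polynomial.coeff_C_mul, ih, ih, Nat.choose_succ_succ]
      push_cast
      ring

lemma coeff_one_add_t_pow : ∀ (b : ℕ) (j : ℕ),
    PowerSeries.coeff (R := ℚ) j ((1 + t) ^ b) = (b.choose j : ℚ) := by
  intro b
  induction b with
  | zero =>
    intro j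
    cases j with
    | zero => simp
    | succ j => simp
  | succ b ih =>
    intro j
    have expand : (1 + t) ^ (b + 1) = (1 + t) ^ b + ((1 + t) ^ b) * t := by
      rw [pow_succ]; ring
    rw [expand, map_add]
    cases j with
    | zero =>
      rw [show ((1 + t) ^ b) * t = ((1 + t) ^ b) * PowerSeries.X from rfl,
        PowerSeries.coeff_zero_mul_X, ih]
      simp
    | succ j =>
      rw [show ((1 + t) ^ b) * t = ((1 + t) ^ b) * PowerSeries.X from rfl,
        PowerSeries.coeff_succ_mul_X, ih, ih, Nat.choose_succ_succ]
      push_cast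
      ring

lemma coeff_natCast_mul (n : ℕ) (z : A) (k : ℕ) :
    PowerSeries.coeff (R := ℚ) k ((n : A) * z) = (n : ℚ) * PowerSeries.coeff (R := ℚ) k z := by
  rw [← map_natCast (PowerSeries.C (R := ℚ)) n, PowerSeries.coeff_C_mul]

lemma phi_pow_eq (m N : ℕ) : phi m ^ N
    = (1 + Polynomial.C t * Polynomial.X) ^ (m * N)
      * (1 + Polynomial.C (1 + t) * Polynomial.X) ^ N := by
  rw [phi, mul_pow, ← pow_mul]

lemma psi_coeff (m N M k : ℕ) :
    PowerSeries.coeff (R := ℚ) k ((phi m ^ N).coeff M)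
      = ∑ p ∈ antidiagonal M, ((m * N).choose p.1 : ℚ) * (N.choose p.2 : ℚ)
          * (if p.1 ≤ k then ((p.2.choose (k - p.1)) : ℚ) else 0) := by
  rw [phi_pow_eq, Polynomial.coeff_mul, map_sum]
  refine Finset.sum_congr rfl fun p _ => ?_
  rw [coeff_one_add_CX_pow, coeff_one_add_CX_pow]
  rw [show ((m * N).choose p.1 : A) * t ^ p.1 * ((N.choose p.2 : A) * (1 + t) ^ p.2)
    = ((m * N).choose p.1 : A) * (((N.choose p.2 : A)) * (t ^ p.1 * (1 + t) ^ p.2)) from by ring]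
  rw [coeff_natCast_mul, coeff_natCast_mul]
  rw [show (t ^ p.1 : A) = (PowerSeries.X : A) ^ p.1 from rfl, PowerSeries.coeff_X_pow_mul']
  split_ifs with h
  · rw [coeff_one_add_t_pow]; ring
  · ring

lemma kerq (P N M s k : ℕ) (h : M + s = N) :
    ∑ p ∈ antidiagonal M, (P.choose p.1 : ℚ) * (N.choose p.2 : ℚ)
        * (if p.1 ≤ k then ((p.2.choose (k - p.1)) : ℚ) else 0)
      = (N.choose (k + s) : ℚ) * ((P + k + s).choose k : ℚ) := by
  rcases Nat.lt_or_ge M k with hMk | hMk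
  · -- k > M : both sides vanish
    rw [Nat.choose_eq_zero_of_lt (show N < k + s by omega)]
    rw [Nat.cast_zero, zero_mul]
    refine Finset.sum_eq_zero fun p hp => ?_
    rw [Finset.HasAntidiagonal.mem_antidiagonal] at hp
    rw [if_pos (show p.1 ≤ k by omega),
      Nat.choose_eq_zero_of_lt (show p.2 < k - p.1 by omega)]
    simp
  · -- k ≤ M
    have step : ∀ p ∈ antidiagonal M,
        (P.choose p.1 : ℚ) * (N.choose p.2 : ℚ)
          * (if p.1 ≤ k then ((p.2.choose (k - p.1)) : ℚ) else 0)
        = (N.choose (k + s) : ℚ)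
            * ((P.choose p.1 : ℚ) * (if p.1 ≤ k then (((k + s).choose (k - p.1)) : ℚ) else 0)) := by
      intro p hp
      rw [Finset.HasAntidiagonal.mem_antidiagonal] at hp
      by_cases hak : p.1 ≤ k
      · rw [if_pos hak, if_pos hak]
        have hnat : N.choose (k + s) * (k + s).choose (s + p.1)
            = N.choose (s + p.1) * (N - (s + p.1)).choose (k + s - (s + p.1)) :=
          Nat.choose_mul (by omega)
        rw [show N - (s + p.1) = p.2 by omega, show k + s - (s + p.1) = k - p.1 by omega] at hnat
        have hsymm : N.choose (s + p.1) = N.choose p.2 := by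
          rw [← Nat.choose_symm (show s + p.1 ≤ N by omega),
            show N - (s + p.1) = p.2 by omega]
        have hsymm2 : (k + s).choose (s + p.1) = (k + s).choose (k - p.1) := by
          rw [← Nat.choose_symm (show s + p.1 ≤ k + s by omega),
            show k + s - (s + p.1) = k - p.1 by omega]
        rw [hsymm, hsymm2] at hnat
        calc (P.choose p.1 : ℚ) * (N.choose p.2 : ℚ) * ((p.2.choose (k - p.1)) : ℚ)
            = (P.choose p.1 : ℚ) * ((N.choose p.2 * p.2.choose (k - p.1) : ℕ) : ℚ) := by
              push_cast; ring
          _ = (P.choose p.1 : ℚ) * ((N.choose (k + s) * (k + s).choose (k - p.1) : ℕ) : ℚ) := by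
              rw [← hnat]
          _ = (N.choose (k + s) : ℚ) * ((P.choose p.1 : ℚ) * (((k + s).choose (k - p.1)) : ℚ)) := by
              push_cast; ring
      · rw [if_neg hak, if_neg hak]; ring
    rw [Finset.sum_congr rfl step, ← Finset.mul_sum]
    congr 1
    rw [Finset.Nat.sum_antidiagonal_eq_sum_range_succ_mk]
    have hsub : range (k + 1) ⊆ range (M + 1) := Finset.range_subset_range.mpr (by omega)
    rw [← Finset.sum_subset hsub (fun x hx hx' => by
      rw [if_neg (by
        have := Finset.mem_range.not.mp hx'
        omega), mul_zero])]
    have : ∑ a ∈ range (k + 1), (P.choose a : ℚ)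
        * (if a ≤ k then (((k + s).choose (k - a)) : ℚ) else 0)
        = ∑ a ∈ range (k + 1), (P.choose a : ℚ) * (((k + s).choose (k - a)) : ℚ) := by
      refine Finset.sum_congr rfl fun a ha => ?_
      rw [if_pos (by have := Finset.mem_range.mp ha; omega)]
    rw [this]
    have hv := Nat.add_choose_eq P (k + s) k
    rw [Finset.Nat.sum_antidiagonal_eq_sum_range_succ_mk] at hv
    rw [show P + k + s = P + (k + s) by omega]
    rw [hv]
    push_cast
    rfl

def gg (m N κ : ℕ) : ℚ := PowerSeries.coeff (R := ℚ) κ (PowerSeries.coeff (R := A) N (u m))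

lemma gg_zero (m κ : ℕ) : gg m 0 κ = 0 := by
  rw [gg, constantCoeff_u, map_zero]

lemma master_coeff (m N r κ : ℕ) (hr : 1 ≤ r) (hrN : r ≤ N) :
    (N : ℚ) * PowerSeries.coeff (R := ℚ) κ (PowerSeries.coeff (R := A) N (u m ^ r))
      = (r : ℚ) * ((N.choose (κ + r) : ℚ) * ((m * N + κ + r).choose κ : ℚ)) := by
  have h2 := congrArg (PowerSeries.coeff (R := ℚ) κ) (masterU m N r hr hrN)
  rw [coeff_natCast_mul, coeff_natCast_mul] at h2
  rw [h2, psi_coeff, kerq (m * N) N (N - r) r κ (by omega)]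

lemma g1 (m N κ : ℕ) (h1 : 1 ≤ N) :
    (N : ℚ) * gg m N κ = (N.choose (κ + 1) : ℚ) * ((m * N + κ + 1).choose κ : ℚ) := by
  have h := master_coeff m N 1 κ le_rfl h1
  rw [pow_one] at h
  rw [gg, h, Nat.cast_one, one_mul]

lemma cc_nat (a b : ℕ) : cc (a : ℤ) (b : ℤ) = (a.choose b : ℚ) := by
  unfold cc
  by_cases h : b ≤ a
  · rw [if_pos ⟨Int.natCast_nonneg b, by exact_mod_cast h⟩]
    simp
  · rw [if_neg (by
      push_neg
      intro _
      exact_mod_cast Nat.lt_of_not_le h),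
      Nat.choose_eq_zero_of_lt (by omega)]
    simp

lemma fA_eq (n m k : ℕ) :
    fA n m k = 1 / ((k : ℚ) + 1) * (n.choose k : ℚ) * ((((n+1) * m + k + 1).choose k : ℚ)) := by
  unfold fA
  rw [show ((n : ℤ) + 1) * m + k + 1 = (((n+1) * m + k + 1 : ℕ) : ℤ) by push_cast; ring]
  rw [cc_nat, cc_nat]

lemma gg_eq_fA (m N κ : ℕ) (h : 1 ≤ N) : gg m N κ = fA (N - 1) m κ := by
  have hg := g1 m N κ h
  have hkey : (N : ℚ) * ((N - 1).choose κ : ℚ) = ((N.choose (κ + 1)) : ℚ) * ((κ : ℚ) + 1) := by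
    have h2 := Nat.add_one_mul_choose_eq (N - 1) κ
    rw [show N - 1 + 1 = N by omega] at h2
    exact_mod_cast h2
  have hNne : (N : ℚ) ≠ 0 := Nat.cast_ne_zero.mpr (by omega)
  have hκne : ((κ : ℚ) + 1) ≠ 0 := by positivity
  rw [fA_eq, show N - 1 + 1 = N by omega, show N * m = m * N from Nat.mul_comm N m]
  apply mul_left_cancel₀ hNne
  rw [hg]
  field_simp
  linear_combination (-((m * N + κ + 1).choose κ : ℚ)) * hkey

theorem face_number_recurrence_type_A' (n m k : ℕ) (hn : 1 ≤ n) (hm : 1 ≤ m)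
    (hk1 : 1 ≤ k) (hk : k ≤ n) :
    2 * (k : ℚ) * fA n m k
      = (((n : ℚ) + 1) * m + 2) *
          ∑ i ∈ Finset.Icc 1 n, ∑ k₁ ∈ Finset.range k,
            fA (i - 1) m k₁ * fA (n - i) m (k - 1 - k₁) := by
  set Q : ℚ := PowerSeries.coeff (R := ℚ) (k-1) (PowerSeries.coeff (R := A) (n+1) (u m ^ 2)) with hQ
  have hQ1 : Q = ∑ p ∈ antidiagonal (n+1), ∑ q ∈ antidiagonal (k-1),
      gg m p.1 q.1 * gg m p.2 q.2 := by
    rw [hQ, sq, PowerSeries.coeff_mul, map_sum]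
    refine Finset.sum_congr rfl fun p _ => ?_
    rw [PowerSeries.coeff_mul]
    rfl
  have hQ3 : Q = ∑ i ∈ Finset.Icc 1 n, ∑ k₁ ∈ Finset.range k,
      fA (i - 1) m k₁ * fA (n - i) m (k - 1 - k₁) := by
    rw [hQ1, Finset.Nat.sum_antidiagonal_eq_sum_range_succ_mk]
    rw [← Finset.sum_subset (show Finset.Icc 1 n ⊆ range (n+2) by
        intro x hx
        rw [Finset.mem_Icc] at hx
        exact Finset.mem_range.mpr (by omega))
      (fun x hx hx' => by
        rw [Finset.mem_range] at hx
        rw [Finset.mem_Icc] at hx'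
        rcases (show x = 0 ∨ x = n + 1 by omega) with h0 | h0
        · subst h0
          exact Finset.sum_eq_zero fun q _ => by rw [gg_zero, zero_mul]
        · subst h0
          exact Finset.sum_eq_zero fun q _ => by
            rw [show n + 1 - (n+1) = 0 by omega, gg_zero, mul_zero])]
    refine Finset.sum_congr rfl fun i hi => ?_
    have hi' := Finset.mem_Icc.mp hi
    rw [Finset.Nat.sum_antidiagonal_eq_sum_range_succ_mk]
    simp only [Nat.succ_eq_add_one]
    rw [show k - 1 + 1 = k by omega]
    refine Finset.sum_congr rfl fun κ₁ _ => ?_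
    rw [gg_eq_fA m i κ₁ (by omega), gg_eq_fA m (n+1-i) _ (by omega),
      show (n+1-i) - 1 = n - i by omega]
  rw [← hQ3]
  have h2 := master_coeff m (n+1) 2 (k-1) (by omega) (by omega)
  rw [show k - 1 + 2 = k + 1 by omega,
    show m * (n+1) + (k-1) + 2 = (n+1) * m + k + 1 by rw [Nat.mul_comm]; omega] at h2
  have e1 : ((n : ℚ) + 1) * (n.choose k : ℚ) = ((k : ℚ) + 1) * ((n+1).choose (k+1) : ℚ) := by
    have h3 := Nat.add_one_mul_choose_eq n k
    have h4 : ((n : ℚ) + 1) * (n.choose k : ℚ) = ((n+1).choose (k+1) : ℚ) * ((k : ℚ) + 1) := by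
      exact_mod_cast h3
    linear_combination h4
  have e2 : (k : ℚ) * (((n+1) * m + k + 1).choose k : ℚ)
      = (((n : ℚ) + 1) * m + 2) * (((n+1) * m + k + 1).choose (k-1) : ℚ) := by
    have h3 := Nat.choose_succ_right_eq ((n+1) * m + k + 1) (k-1)
    rw [show k - 1 + 1 = k by omega,
      show (n+1) * m + k + 1 - (k-1) = (n+1) * m + 2 by omega] at h3
    have h4 : (((n+1)*m+k+1).choose k : ℚ) * (k : ℚ)
        = (((n+1)*m+k+1).choose (k-1) : ℚ) * (((n : ℚ)+1)*m+2) := by exact_mod_cast h3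
    linear_combination h4
  have hc : (((n : ℚ) + 1) * m + 2) = (((n+1) * m : ℕ) : ℚ) + 2 := by push_cast; ring
  have hn1 : ((n : ℚ) + 1) ≠ 0 := by positivity
  have hk1' : ((k : ℚ) + 1) ≠ 0 := by positivity
  apply mul_left_cancel₀ hn1
  rw [fA_eq]
  have h2' : ((n : ℚ) + 1) * Q = 2 * (((n+1).choose (k+1) : ℚ) * (((n+1) * m + k + 1).choose (k-1) : ℚ)) := by
    have : (((n+1 : ℕ)) : ℚ) = (n : ℚ) + 1 := by push_cast; ring
    rw [← this]
    exact_mod_cast h2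
  calc ((n : ℚ) + 1) * (2 * k * (1 / ((k : ℚ) + 1) * (n.choose k : ℚ) * ((((n+1) * m + k + 1).choose k : ℚ))))
      = (2 * k / ((k:ℚ)+1)) * (((n : ℚ) + 1) * (n.choose k : ℚ)) * ((((n+1) * m + k + 1).choose k : ℚ)) := by
        ring
    _ = (2 * k / ((k:ℚ)+1)) * (((k : ℚ) + 1) * ((n+1).choose (k+1) : ℚ)) * ((((n+1) * m + k + 1).choose k : ℚ)) := by
        rw [e1]
    _ = 2 * ((n+1).choose (k+1) : ℚ) * ((k : ℚ) * (((n+1) * m + k + 1).choose k : ℚ)) := by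
        field_simp
    _ = 2 * ((n+1).choose (k+1) : ℚ) * ((((n : ℚ) + 1) * m + 2) * (((n+1) * m + k + 1).choose (k-1) : ℚ)) := by
        rw [e2]
    _ = (((n : ℚ) + 1) * m + 2) * (((n : ℚ) + 1) * Q) := by
        rw [h2']; ring
    _ = ((n : ℚ) + 1) * (((((n : ℚ)) + 1) * m + 2) * Q) := by
        ring

end
end FaceGF

/-- The recurrence for the type-A face numbers:
`2k·f^A_k(n,m) = ((n+1)m+2) · Σ_{i=1}^{n} Σ_{k₁+k₂=k−1} f^A_{k₁}(i−1,m)·f^A_{k₂}(n−i,m)`. -/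
theorem face_number_recurrence_type_A (n m k : ℕ) (hn : 1 ≤ n) (hm : 1 ≤ m)
    (hk1 : 1 ≤ k) (hk : k ≤ n) :
    2 * (k : ℚ) * fA n m k
      = (((n : ℚ) + 1) * m + 2) *
          ∑ i ∈ Finset.Icc 1 n, ∑ k₁ ∈ Finset.range k,
            fA (i - 1) m k₁ * fA (n - i) m (k - 1 - k₁) := by
  exact FaceGF.face_number_recurrence_type_A' n m k hn hm hk1 hk
end

section
/- For all integers n ≥ 1 and m ≥ 1, one has Σ_{k=0}^{n} (−1)^{n−k} C(n,k)·C(nm+k, k) = C(nm, n); that is, the reduced Euler characteristic of Δ^m(B_n) equals (−1)^{n−1} times the number of maximal simplices of Δ^{m−1}(B_n). -/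
open Finset

private lemma alt_sum_q (d : ℕ) :
    ∑ i ∈ Finset.range (d + 1), (-1 : ℚ) ^ (d - i) * (d.choose i : ℚ)
      = if d = 0 then 1 else 0 := by
  have h : ∑ i ∈ Finset.range (d + 1), (-1 : ℚ) ^ (d - i) * (d.choose i : ℚ)
      = (-1) ^ d * ∑ i ∈ Finset.range (d + 1), (-1 : ℚ) ^ i * (d.choose i : ℚ) := by
    rw [Finset.mul_sum]
    refine Finset.sum_congr rfl fun i hi => ?_
    have hi' : i ≤ d := Nat.lt_succ_iff.mp (Finset.mem_range.mp hi)
    have : (-1 : ℚ) ^ (d - i) * (-1) ^ i = (-1) ^ d := by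
      rw [← pow_add, Nat.sub_add_cancel hi']
    have hsq : (-1 : ℚ) ^ i * (-1) ^ i = 1 := by
      rw [← pow_add, ← two_mul, pow_mul]; norm_num
    calc (-1 : ℚ) ^ (d - i) * (d.choose i : ℚ)
        = ((-1 : ℚ) ^ (d - i) * (-1) ^ i) * ((-1) ^ i * (d.choose i : ℚ)) := by
          rw [show ((-1 : ℚ) ^ (d - i) * (-1) ^ i) * ((-1) ^ i * (d.choose i : ℚ))
              = (-1 : ℚ) ^ (d - i) * ((-1) ^ i * (-1) ^ i) * (d.choose i : ℚ) from by ring,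
            hsq, mul_one]
      _ = (-1 : ℚ) ^ d * ((-1) ^ i * (d.choose i : ℚ)) := by rw [this]
  have hint : ∑ i ∈ Finset.range (d + 1), (-1 : ℚ) ^ i * (d.choose i : ℚ)
      = ((if d = 0 then 1 else 0 : ℤ) : ℚ) := by
    rw [← Int.alternating_sum_range_choose]
    push_cast
    rfl
  rw [h, hint]
  rcases Nat.eq_zero_or_pos d with hd | hd
  · simp [hd]
  · simp [Nat.pos_iff_ne_zero.mp hd]

private lemma inner_sum_q (n j : ℕ) (hj : j ≤ n) :
    ∑ k ∈ Finset.range (n + 1), (-1 : ℚ) ^ (n - k) * (n.choose k : ℚ) * (k.choose j : ℚ)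
      = if j = n then 1 else 0 := by
  -- drop terms with k < j
  rw [Finset.range_eq_Ico, ← Finset.sum_Ico_consecutive _ (Nat.zero_le j) (by omega)]
  have h0 : ∑ k ∈ Finset.Ico 0 j, (-1 : ℚ) ^ (n - k) * (n.choose k : ℚ) * (k.choose j : ℚ) = 0 := by
    refine Finset.sum_eq_zero fun k hk => ?_
    have : k < j := (Finset.mem_Ico.mp hk).2
    simp [Nat.choose_eq_zero_of_lt this]
  rw [h0, zero_add, Finset.sum_Ico_eq_sum_range]
  have hlen : n + 1 - j = (n - j) + 1 := by omega
  rw [hlen]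
  have hterm : ∀ i ∈ Finset.range (n - j + 1),
      (-1 : ℚ) ^ (n - (j + i)) * (n.choose (j + i) : ℚ) * ((j + i).choose j : ℚ)
        = (n.choose j : ℚ) * ((-1) ^ (n - j - i) * ((n - j).choose i : ℚ)) := by
    intro i hi
    have hi' : i ≤ n - j := Nat.lt_succ_iff.mp (Finset.mem_range.mp hi)
    have hkn : j + i ≤ n := by omega
    have hmul := Nat.choose_mul (n := n) (Nat.le_add_right j i)
    have hsub : j + i - j = i := by omega
    rw [hsub] at hmul
    have hcast : (n.choose (j + i) : ℚ) * ((j + i).choose j : ℚ)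
        = (n.choose j : ℚ) * ((n - j).choose i : ℚ) := by
      exact_mod_cast congrArg (Nat.cast : ℕ → ℚ) hmul
    have hexp : n - (j + i) = n - j - i := by omega
    rw [mul_assoc, hcast, hexp]; ring
  rw [Finset.sum_congr rfl hterm, ← Finset.mul_sum, alt_sum_q (n - j)]
  have : n - j = 0 ↔ j = n := by omega
  rcases eq_or_ne j n with h | h
  · simp [h]
  · have : n - j ≠ 0 := by omega
    simp [h, this]

private lemma key_q (n N : ℕ) :
    ∑ k ∈ Finset.range (n + 1),
        (-1 : ℚ) ^ (n - k) * (n.choose k : ℚ) * ((N + k).choose k : ℚ)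
      = (N.choose n : ℚ) := by
  have hV : ∀ k ∈ Finset.range (n + 1),
      ((N + k).choose k : ℚ) = ∑ j ∈ Finset.range (n + 1), (N.choose j : ℚ) * (k.choose j : ℚ) := by
    intro k hk
    have hk' : k ≤ n := Nat.lt_succ_iff.mp (Finset.mem_range.mp hk)
    have h1 : (N + k).choose k
        = ∑ i ∈ Finset.range (k + 1), N.choose i * k.choose (k - i) := by
      rw [Nat.add_choose_eq]
      rw [Finset.Nat.sum_antidiagonal_eq_sum_range_succ_mk]
    have h2 : ∀ i ∈ Finset.range (k + 1), N.choose i * k.choose (k - i)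
        = N.choose i * k.choose i := by
      intro i hi
      have : i ≤ k := Nat.lt_succ_iff.mp (Finset.mem_range.mp hi)
      rw [Nat.choose_symm this]
    rw [h1, Finset.sum_congr rfl h2]
    push_cast
    refine Finset.sum_subset (Finset.range_subset_range.mpr (Nat.succ_le_succ hk')) ?_
    intro j _ hj
    have : k < j := by
      simp only [Finset.mem_range, not_lt] at hj
      omega
    simp [Nat.choose_eq_zero_of_lt this]
  calc ∑ k ∈ Finset.range (n + 1),
          (-1 : ℚ) ^ (n - k) * (n.choose k : ℚ) * ((N + k).choose k : ℚ)
      = ∑ k ∈ Finset.range (n + 1), ∑ j ∈ Finset.range (n + 1),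
          (N.choose j : ℚ) * ((-1) ^ (n - k) * (n.choose k : ℚ) * (k.choose j : ℚ)) := by
        refine Finset.sum_congr rfl fun k hk => ?_
        rw [hV k hk, Finset.mul_sum]
        refine Finset.sum_congr rfl fun j _ => ?_
        ring
    _ = ∑ j ∈ Finset.range (n + 1), (N.choose j : ℚ) *
          ∑ k ∈ Finset.range (n + 1), (-1 : ℚ) ^ (n - k) * (n.choose k : ℚ) * (k.choose j : ℚ) := by
        rw [Finset.sum_comm]
        exact Finset.sum_congr rfl fun j _ => (Finset.mul_sum _ _ _).symm
    _ = (N.choose n : ℚ) := by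
        rw [Finset.sum_congr rfl fun j hj =>
          congrArg _ (inner_sum_q n j (Nat.lt_succ_iff.mp (Finset.mem_range.mp hj)))]
        simp

/-- `Σ_{k=0}^{n} (−1)^{n−k} C(n,k)·C(nm+k, k) = C(nm, n)`: the reduced Euler
characteristic of `Δ^m(B_n)` equals `(−1)^{n−1}` times the number of maximal
simplices of `Δ^{m−1}(B_n)`. -/
theorem euler_characteristic_type_B (n m : ℕ) (hn : 1 ≤ n) (hm : 1 ≤ m) :
    ∑ k ∈ Finset.range (n + 1),
        (-1 : ℚ) ^ (n - k) * (n.choose k : ℚ) * ((n * m + k).choose k : ℚ)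
      = ((n * m).choose n : ℚ) := by
  exact key_q n (n * m)
end

section
/- For all integers n ≥ 2, m ≥ 1 and every rational number x, one has Σ_{k=0}^{n} f^D_{n−k}(n,m)·(x−1)^k = Σ_{k=0}^{n} h^D_{n−k}(n,m)·x^k, where h^D_k(n,m) = C(n,k)·C((n−1)m, k) + C(n−2,k−2)·C((n−1)m+1, k); that is, the h-vector of the generalized cluster complex Δ^m(D_n) is given by h_k = C(n,k)·C((n−1)m, k) + C(n−2,k−2)·C((n−1)m+1, k) (the type-D m-Narayana numbers). -/
open Finset

lemma cc_nat (a b : ℕ) : cc a b = (a.choose b : ℚ) := by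
  unfold cc
  split_ifs with h
  · simp
  · have : a < b := by omega
    rw [Nat.choose_eq_zero_of_lt this]; simp

lemma cc_zero_of_neg {a b : ℤ} (hb : b < 0) : cc a b = 0 := by
  unfold cc; rw [if_neg]; omega

lemma cc_pascal (a : ℕ) (b : ℤ) : cc ((a:ℤ)+1) b = cc a b + cc a (b-1) := by
  rcases lt_trichotomy b 0 with h | h | h
  · rw [cc_zero_of_neg h, cc_zero_of_neg h, cc_zero_of_neg (by omega)]; ring
  · subst h
    rw [show cc (↑a) (0-1) = 0 from cc_zero_of_neg (by norm_num)]
    have e : ((a:ℤ)+1) = ((a+1:ℕ):ℤ) := by push_cast; ring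
    rw [e, show (0:ℤ) = ((0:ℕ):ℤ) by norm_num, cc_nat, cc_nat]
    simp
  · obtain ⟨c, rfl⟩ : ∃ c : ℕ, b = (c:ℤ)+1 := ⟨(b-1).toNat, by omega⟩
    have e1 : ((a:ℤ)+1) = ((a+1:ℕ):ℤ) := by push_cast; ring
    have e2 : ((c:ℤ)+1) = ((c+1:ℕ):ℤ) := by push_cast; ring
    rw [e1, e2, show ((c+1:ℕ):ℤ)-1 = ((c:ℕ):ℤ) by push_cast; ring,
      cc_nat, cc_nat, cc_nat, Nat.choose_succ_succ]
    push_cast; ring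

lemma cc_symm (a b : ℕ) : cc a ((a:ℤ) - b) = cc a b := by
  rcases le_or_gt b a with h | h
  · have e : (a:ℤ) - b = ((a - b : ℕ):ℤ) := by omega
    rw [e, cc_nat, cc_nat, Nat.choose_symm h]
  · rw [cc_zero_of_neg (by omega), cc_nat, Nat.choose_eq_zero_of_lt h]; simp

lemma diff_sum (b : ℤ) : ∀ (k a : ℕ),
    ∑ i ∈ Finset.range (k+1), (-1:ℚ)^i * (k.choose i : ℚ) * cc ((a:ℤ)+i) b
      = (-1)^k * cc a (b - k) := by
  intro k
  induction k with
  | zero => intro a; simp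
  | succ k ih =>
    intro a
    have h1 : ∑ i ∈ Finset.range (k+2), (-1:ℚ)^i * (k.choose i : ℚ) * cc ((a:ℤ)+i) b
        = (-1)^k * cc a (b - k) := by
      rw [Finset.sum_range_succ, ih a, Nat.choose_succ_self]
      simp
    rw [Finset.sum_range_succ'] at h1 ⊢
    have h2 : ∀ i ∈ Finset.range (k+1),
        (-1:ℚ)^(i+1) * ((k+1).choose (i+1) : ℚ) * cc ((a:ℤ)+(i+1:ℕ)) b
        = (-1) * ((-1:ℚ)^i * (k.choose i : ℚ) * cc (((a+1:ℕ):ℤ)+i) b)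
          + (-1:ℚ)^(i+1) * (k.choose (i+1) : ℚ) * cc ((a:ℤ)+(i+1:ℕ)) b := by
      intro i _
      have harg : ((a:ℤ)) + ((i+1:ℕ):ℤ) = ((a+1:ℕ):ℤ) + i := by push_cast; ring
      rw [Nat.choose_succ_succ]
      rw [harg]
      push_cast
      ring
    rw [Finset.sum_congr rfl h2, Finset.sum_add_distrib, ← Finset.mul_sum, ih (a+1)]
    have h3 : ∑ i ∈ Finset.range (k+1), (-1:ℚ)^(i+1) * (k.choose (i+1) : ℚ) * cc ((a:ℤ)+(i+1:ℕ)) b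
        + (-1:ℚ)^0 * ((k+1).choose 0 : ℚ) * cc ((a:ℤ)+(0:ℕ)) b
        = (-1)^k * cc a (b - k) := by
      rw [← h1]
      congr 1
      simp
    have h4 : cc ((a:ℤ)+1) (b - k) = cc a (b-k) + cc a (b-k-1) := cc_pascal a (b-k)
    have hc : cc (((a+1:ℕ)):ℤ) (b - k) = cc ((a:ℤ)+1) (b-k) := by norm_cast
    rw [add_assoc, h3, hc, h4]
    have : b - ((k:ℤ)+1) = b - k - 1 := by ring
    push_cast [this]
    ring

lemma npow_sub {j k : ℕ} (h : j ≤ k) : ((-1:ℚ))^(k-j) = (-1)^k * (-1)^j := by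
  have h1 : (-1:ℚ)^(k-j) * (-1)^j = (-1)^k := by
    rw [← pow_add, Nat.sub_add_cancel h]
  have h2 : (-1:ℚ)^j * (-1)^j = 1 := by
    rw [← pow_add]; exact Even.neg_one_pow ⟨j, rfl⟩
  calc (-1:ℚ)^(k-j) = (-1:ℚ)^(k-j) * ((-1)^j * (-1)^j) := by rw [h2, mul_one]
    _ = (-1)^k * (-1)^j := by rw [← mul_assoc, h1]

lemma coeff_lemma (n m i : ℕ) (hn : 2 ≤ n) (hm : 1 ≤ m) (hi : i ≤ n) :
    ∑ k ∈ Finset.range (n+1), fD n m (n-k) * ((-1:ℚ)^(k-i) * (k.choose i : ℚ))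
      = cc n ((n:ℤ)-i) * cc (((n:ℤ)-1)*m) ((n:ℤ)-i)
        + cc ((n:ℤ)-2) ((n:ℤ)-i-2) * cc (((n:ℤ)-1)*m+1) ((n:ℤ)-i) := by
  obtain ⟨κ, hκ⟩ : ∃ κ, κ = n - i := ⟨_, rfl⟩
  set M := (n-1)*m with hMdef
  have hM1 : 1 ≤ M := by
    have h1 : 1 ≤ n - 1 := by omega
    calc 1 = 1*1 := by ring
      _ ≤ (n-1)*m := Nat.mul_le_mul h1 hm
  have hMc : ((n:ℤ)-1)*(m:ℤ) = (M:ℤ) := by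
    rw [hMdef, Nat.cast_mul, Nat.cast_sub (by omega : 1 ≤ n)]
    push_cast; ring
  have hκc : (n:ℤ) - i = (κ:ℤ) := by omega
  have hS1 : ∑ j ∈ Finset.range (κ+1),
      (cc n j * cc ((M:ℤ)+j) j) * ((-1:ℚ)^(κ-j) * ((n-j).choose i : ℚ))
      = cc n κ * cc M κ := by
    have step : ∀ j ∈ Finset.range (κ+1),
        (cc n j * cc ((M:ℤ)+j) j) * ((-1:ℚ)^(κ-j) * ((n-j).choose i : ℚ))
        = ((n.choose κ : ℚ) * (-1)^κ) * ((-1:ℚ)^j * (κ.choose j : ℚ) * cc ((M:ℤ)+j) M) := by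
      intro j hj
      have hjκ : j ≤ κ := by
        have := Finset.mem_range.mp hj; omega
      have e1 : cc (n:ℤ) (j:ℤ) = (n.choose j : ℚ) := cc_nat n j
      have e2 : cc ((M:ℤ)+j) (j:ℤ) = cc ((M:ℤ)+j) (M:ℤ) := by
        rw [show (M:ℤ)+(j:ℤ) = ((M+j:ℕ):ℤ) by push_cast; ring, cc_nat, cc_nat,
          ← Nat.choose_symm (by omega : j ≤ M + j), show M+j-j = M by omega]
      have e3 : ((n-j).choose i : ℚ) = ((n-j).choose (κ-j) : ℚ) := by
        rw [← Nat.choose_symm (by omega : κ - j ≤ n - j), show n-j-(κ-j) = i by omega]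
      have e4 : (n.choose j : ℚ) * ((n-j).choose (κ-j) : ℚ)
          = (n.choose κ : ℚ) * (κ.choose j : ℚ) := by
        rw [← Nat.cast_mul, ← Nat.cast_mul, ← Nat.choose_mul hjκ]
      rw [e1, e2, e3, npow_sub hjκ]
      linear_combination ((-1:ℚ)^κ * (-1)^j * cc ((M:ℤ)+j) (M:ℤ)) * e4
    rw [Finset.sum_congr rfl step, ← Finset.mul_sum, diff_sum (M:ℤ) κ M]
    rw [cc_symm M κ, cc_nat n κ]
    have h2 : ((-1:ℚ)^κ) * ((-1)^κ) = 1 := by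
      rw [← pow_add]; exact Even.neg_one_pow ⟨κ, rfl⟩
    linear_combination ((n.choose κ:ℚ) * cc (M:ℤ) (κ:ℤ)) * h2
  have hS2 : ∑ j ∈ Finset.range (κ+1),
      (cc ((n:ℤ)-2) ((j:ℤ)-2) * cc ((M:ℤ)+j-1) j) * ((-1:ℚ)^(κ-j) * ((n-j).choose i : ℚ))
      = cc ((n:ℤ)-2) ((κ:ℤ)-2) * cc ((M:ℤ)+1) κ := by
    rcases lt_or_ge κ 2 with hκ2 | hκ2
    · rw [Finset.sum_eq_zero, cc_zero_of_neg (by omega : (κ:ℤ)-2 < 0)]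
      · ring
      · intro j hj
        have hj' : (j:ℤ) - 2 < 0 := by
          have := Finset.mem_range.mp hj; omega
        rw [cc_zero_of_neg hj']; ring
    · obtain ⟨κ', rfl⟩ : ∃ κ', κ = κ' + 2 := ⟨κ - 2, by omega⟩
      have hκn : κ' + 2 ≤ n := by omega
      rw [show κ'+2+1 = κ'+1+1+1 by ring, Finset.sum_range_succ', Finset.sum_range_succ']
      have hF0 : (cc ((n:ℤ)-2) (((0:ℕ):ℤ)-2) * cc ((M:ℤ)+(0:ℕ)-1) ((0:ℕ):ℤ))
          * ((-1:ℚ)^(κ'+2-(0:ℕ)) * ((n-(0:ℕ)).choose i : ℚ)) = 0 := by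
        rw [cc_zero_of_neg (by norm_num : ((0:ℕ):ℤ)-2 < 0)]; ring
      have hF1 : (cc ((n:ℤ)-2) (((0+1:ℕ):ℤ)-2) * cc ((M:ℤ)+((0+1:ℕ))-1) ((0+1:ℕ):ℤ))
          * ((-1:ℚ)^(κ'+2-(0+1:ℕ)) * ((n-(0+1:ℕ)).choose i : ℚ)) = 0 := by
        rw [cc_zero_of_neg (by norm_num : (((0+1:ℕ)):ℤ)-2 < 0)]; ring
      have step : ∀ j ∈ Finset.range (κ'+1),
          (cc ((n:ℤ)-2) (((j+1+1:ℕ):ℤ)-2) * cc ((M:ℤ)+((j+1+1:ℕ))-1) ((j+1+1:ℕ):ℤ))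
            * ((-1:ℚ)^(κ'+2-(j+1+1)) * ((n-(j+1+1)).choose i : ℚ))
          = (((n-2).choose κ' : ℚ) * (-1)^κ')
            * ((-1:ℚ)^j * (κ'.choose j : ℚ) * cc (((M+1:ℕ):ℤ)+j) ((M-1:ℕ):ℤ)) := by
        intro j hj
        have hjκ : j ≤ κ' := by
          have := Finset.mem_range.mp hj; omega
        have g1 : cc ((n:ℤ)-2) (((j+1+1:ℕ):ℤ)-2) = ((n-2).choose j : ℚ) := by
          rw [show ((n:ℤ)-2) = ((n-2:ℕ):ℤ) by omega,
            show ((j+1+1:ℕ):ℤ)-2 = ((j:ℕ):ℤ) by push_cast; ring, cc_nat]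
        have g2 : cc ((M:ℤ)+((j+1+1:ℕ))-1) ((j+1+1:ℕ):ℤ)
            = cc (((M+1:ℕ):ℤ)+j) ((M-1:ℕ):ℤ) := by
          rw [show (M:ℤ)+((j+1+1:ℕ):ℤ)-1 = ((M+j+1:ℕ):ℤ) by push_cast; ring,
            show ((M+1:ℕ):ℤ)+(j:ℤ) = ((M+j+1:ℕ):ℤ) by push_cast; ring,
            show ((j+1+1:ℕ):ℤ) = ((j+2:ℕ):ℤ) by push_cast; ring,
            cc_nat, cc_nat,
            ← Nat.choose_symm (show j+2 ≤ M+j+1 by omega),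
            show M+j+1-(j+2) = M-1 by omega]
        have g3 : ((n-(j+1+1)).choose i : ℚ) = (((n-2)-j).choose (κ'-j) : ℚ) := by
          rw [show n-(j+1+1) = (n-2)-j by omega,
            ← Nat.choose_symm (show κ'-j ≤ (n-2)-j by omega),
            show (n-2)-j-(κ'-j) = i by omega]
        have g4 : (-1:ℚ)^(κ'+2-(j+1+1)) = (-1)^κ' * (-1)^j := by
          rw [show κ'+2-(j+1+1) = κ'-j by omega, npow_sub hjκ]
        have g5 : ((n-2).choose j : ℚ) * (((n-2)-j).choose (κ'-j) : ℚ)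
            = ((n-2).choose κ' : ℚ) * (κ'.choose j : ℚ) := by
          rw [← Nat.cast_mul, ← Nat.cast_mul, ← Nat.choose_mul hjκ]
        rw [g1, g2, g3, g4]
        linear_combination ((-1:ℚ)^κ' * (-1)^j * cc (((M+1:ℕ):ℤ)+j) ((M-1:ℕ):ℤ)) * g5
      rw [Finset.sum_congr rfl step, ← Finset.mul_sum, diff_sum ((M-1:ℕ):ℤ) κ' (M+1)]
      rw [hF0, hF1]
      rw [show ((M-1:ℕ):ℤ) - (κ':ℤ) = ((M+1:ℕ):ℤ) - ((κ'+2:ℕ):ℤ) by omega,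
        cc_symm (M+1) (κ'+2)]
      have h2 : ((-1:ℚ)^κ') * ((-1)^κ') = 1 := by
        rw [← pow_add]; exact Even.neg_one_pow ⟨κ', rfl⟩
      have r1 : cc ((n:ℤ)-2) (((κ'+2:ℕ):ℤ)-2) = ((n-2).choose κ' : ℚ) := by
        rw [show ((n:ℤ)-2) = ((n-2:ℕ):ℤ) by omega,
          show ((κ'+2:ℕ):ℤ)-2 = ((κ':ℕ):ℤ) by push_cast; ring, cc_nat]
      have r2 : cc ((M:ℤ)+1) ((κ'+2:ℕ):ℤ) = cc ((M+1:ℕ):ℤ) ((κ'+2:ℕ):ℤ) := by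
        norm_cast
      rw [r1, r2]
      linear_combination (((n-2).choose κ' : ℚ) * cc ((M+1:ℕ):ℤ) ((κ'+2:ℕ):ℤ)) * h2
  have hsub : Finset.Ico i (n+1) ⊆ Finset.range (n+1) := by
    intro k hk
    simp only [Finset.mem_Ico] at hk
    exact Finset.mem_range.mpr hk.2
  rw [← Finset.sum_subset hsub (fun k hk hk2 => by
    have h1 := Finset.mem_range.mp hk
    have h2 : k < i := by
      by_contra hc
      exact hk2 (Finset.mem_Ico.mpr ⟨by omega, h1⟩)
    rw [Nat.choose_eq_zero_of_lt h2]
    simp)]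
  rw [Finset.sum_Ico_eq_sum_range, show n + 1 - i = κ + 1 by omega,
    ← Finset.sum_range_reflect]
  trans (∑ j ∈ Finset.range (κ+1),
      ((cc n j * cc ((M:ℤ)+j) j) * ((-1:ℚ)^(κ-j) * ((n-j).choose i : ℚ))
        + (cc ((n:ℤ)-2) ((j:ℤ)-2) * cc ((M:ℤ)+j-1) j)
            * ((-1:ℚ)^(κ-j) * ((n-j).choose i : ℚ))))
  · apply Finset.sum_congr rfl
    intro j hj
    have hjκ : j ≤ κ := by have := Finset.mem_range.mp hj; omega
    rw [show κ + 1 - 1 - j = κ - j by omega, show i + (κ - j) = n - j by omega,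
      show n - (n - j) = j by omega, show n - j - i = κ - j by omega]
    simp only [fD]
    rw [hMc]
    ring
  · rw [Finset.sum_add_distrib, hS1, hS2, hMc, hκc]

/-- The `h`-vector of the generalized cluster complex `Δ^m(D_n)` is given by the
type-D `m`-Narayana numbers
`h^D_k(n,m) = C(n,k)·C((n−1)m, k) + C(n−2,k−2)·C((n−1)m+1, k)`:
for every rational `x`,
`Σ_{k=0}^{n} f^D_{n−k}(n,m)·(x−1)^k = Σ_{k=0}^{n} h^D_{n−k}(n,m)·x^k`. -/
theorem h_vector_type_D (n m : ℕ) (hn : 2 ≤ n) (hm : 1 ≤ m) (x : ℚ) :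
    ∑ k ∈ Finset.range (n + 1), fD n m (n - k) * (x - 1) ^ k
      = ∑ k ∈ Finset.range (n + 1),
          (cc n ((n : ℤ) - k) * cc (((n : ℤ) - 1) * m) ((n : ℤ) - k)
            + cc ((n : ℤ) - 2) ((n : ℤ) - k - 2)
              * cc (((n : ℤ) - 1) * m + 1) ((n : ℤ) - k)) * x ^ k := by
  have expand : ∀ k ∈ Finset.range (n+1), fD n m (n-k) * (x-1)^k
      = ∑ i ∈ Finset.range (n+1),
          fD n m (n-k) * ((-1:ℚ)^(k-i) * (k.choose i : ℚ)) * x^i := by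
    intro k hk
    have hk' : k ≤ n := by have := Finset.mem_range.mp hk; omega
    rw [show x - 1 = x + (-1) by ring, add_pow]
    trans (∑ i ∈ Finset.range (k+1),
        fD n m (n-k) * ((-1:ℚ)^(k-i) * (k.choose i : ℚ)) * x^i)
    · rw [Finset.mul_sum]
      apply Finset.sum_congr rfl
      intro j _
      ring
    · apply Finset.sum_subset (Finset.range_subset_range.mpr (by omega : k+1 ≤ n+1))
      intro j hj hj2
      have hlt : k < j := by
        simp only [Finset.mem_range] at hj hj2
        omega
      rw [Nat.choose_eq_zero_of_lt hlt]
      simp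
  rw [Finset.sum_congr rfl expand, Finset.sum_comm]
  apply Finset.sum_congr rfl
  intro i hi
  have hi' : i ≤ n := by have := Finset.mem_range.mp hi; omega
  rw [← Finset.sum_mul, coeff_lemma n m i hn hm hi']
end

section
/- For all integers n ≥ 1 and m ≥ 1, the positive Fuss–Catalan numbers satisfy the recurrence 2n·N⁺(n,m) = ((m+1)(n+1)−2) · Σ_{i=1}^{n} N⁺(i−1, m)·N⁺(n−i, m). -/
/-- The positive Fuss–Catalan number `N⁺(j, m) = (1/(j+1))·C((j+1)m+j−1, j)`,
counting the maximal simplices of the generalized cluster complex `Δ^m(A_j)`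
which involve only positive colored roots. -/
def Nplus (j m : ℕ) : ℚ :=
  1 / ((j : ℚ) + 1) * cc (((j : ℤ) + 1) * m + j - 1) j


def D (z x n : ℕ) : ℚ :=
  if n = 0 then 1 else (x : ℚ) / (x + n * z) * ((x + n * z).choose n : ℚ)

lemma chooseB (a k : ℕ) :
    ((a:ℚ)+1) * (a.choose k) = ((k:ℚ)+1) * ((a+1).choose (k+1)) := by
  have h := Nat.add_one_mul_choose_eq a k
  have h' : ((a+1) * a.choose k : ℚ) = ((a+1).choose (k+1) * (k+1) : ℕ) := by
    exact_mod_cast congrArg (Nat.cast (R := ℚ)) h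
  push_cast at h'
  linarith [h']

lemma chooseA (a k : ℕ) :
    ((a:ℚ)+1) * (a.choose (k+1)) = ((a:ℚ) - k) * ((a+1).choose (k+1)) := by
  have hp : (((a+1).choose (k+1) : ℚ)) = a.choose k + a.choose (k+1) := by
    exact_mod_cast congrArg (Nat.cast (R := ℚ)) (Nat.choose_succ_succ a k)
  have hb := chooseB a k
  nlinarith [hp, hb]


lemma D_pascal (z x n : ℕ) (hz : 1 ≤ z) :
    D z (x+1) (n+1) = D z x (n+1) + D z (x+z) n := by
  rcases n with _ | n
  · simp only [D, if_neg (Nat.one_ne_zero), if_pos rfl]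
    rw [Nat.choose_one_right, Nat.choose_one_right]
    have h1 : ((x:ℚ) + 1 + 1 * z) ≠ 0 := by positivity
    have h2 : ((x:ℚ) + 1 * z) ≠ 0 := by
      have : (1:ℚ) ≤ z := by exact_mod_cast hz
      positivity
    push_cast
    field_simp
  · set a := x + (n+2)*z with hadef
    have hcast : (a:ℚ) = x + (n+2)*z := by rw [hadef]; push_cast; ring
    have haz : (1:ℚ) ≤ z := by exact_mod_cast hz
    have ha0 : (a:ℚ) ≠ 0 := by
      have hx0 : (0:ℚ) ≤ x := by positivity
      have hn0 : (0:ℚ) ≤ (n:ℚ) := by positivity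
      nlinarith [hcast]
    have ha1 : (a:ℚ) + 1 ≠ 0 := by positivity
    have hA := chooseA a (n+1)
    have hB := chooseB a (n+1)
    have e1 : x + 1 + (n+1+1)*z = a + 1 := by rw [hadef]; try ring
    have e2 : x + (n+1+1)*z = a := by rw [hadef]; try ring
    have e3 : x + z + (n+1)*z = a := by rw [hadef]; try ring
    have q1 : ((x:ℚ)+1) + (n+1+1)*z = (a:ℚ)+1 := by rw [hcast]; push_cast; ring
    have q2 : (x:ℚ) + (n+1+1)*z = (a:ℚ) := by rw [hcast]; push_cast; ring
    have q3 : ((x:ℚ)+(z:ℚ)) + (n+1)*z = (a:ℚ) := by rw [hcast]; push_cast; ring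
    simp only [D, if_neg (Nat.succ_ne_zero _)]
    rw [e1, e2, e3]
    push_cast
    rw [show ((x:ℚ)+1+(↑n+1+1)*↑z) = (a:ℚ)+1 from by rw [hcast]; ring,
        show ((x:ℚ)+(↑n+1+1)*↑z) = (a:ℚ) from by rw [hcast]; ring,
        show ((x:ℚ)+↑z+(↑n+1)*↑z) = (a:ℚ) from by rw [hcast]; ring]
    set c2 : ℚ := ((a+1).choose (n+1+1) : ℚ) with hc2
    set c1 : ℚ := (a.choose (n+1+1) : ℚ) with hc1
    set c0 : ℚ := (a.choose (n+1) : ℚ) with hc0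
    push_cast at hA hB
    field_simp
    linear_combination (-(x:ℚ)) * hA + (-(x:ℚ) - z) * hB + c2 * hcast

lemma D_zero_right (z x : ℕ) : D z x 0 = 1 := by simp [D]

lemma D_zero_left (z n : ℕ) : D z 0 n = if n = 0 then 1 else 0 := by
  rcases n with _ | n
  · simp [D]
  · simp [D]

lemma conv (z : ℕ) (hz : 1 ≤ z) :
    ∀ n x y : ℕ, ∑ k ∈ Finset.range (n+1), D z x k * D z y (n-k) = D z (x+y) n := by
  intro n
  induction n using Nat.strong_induction_on with
  | _ n ih =>
    intro x y
    induction y with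
    | zero =>
      rw [Finset.sum_eq_single n]
      · simp [D_zero_left]
      · intro k hk hkn
        have : n - k ≠ 0 := by
          simp only [Finset.mem_range] at hk; omega
        simp [D_zero_left, this]
      · intro h; simp at h
    | succ y ihy =>
      rcases n with _ | n
      · simp [D_zero_right]
      · have step : ∀ k ∈ Finset.range (n+1+1),
            D z x k * D z (y+1) (n+1-k)
              = D z x k * D z y (n+1-k)
                + D z x k * (if k ≤ n then D z (y+z) (n-k) else 0) := by
          intro k hk
          simp only [Finset.mem_range] at hk
          rcases Nat.lt_or_ge k (n+1) with h | h
          · have h1 : n + 1 - k = (n - k) + 1 := by omega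
            rw [if_pos (by omega), h1, D_pascal z y (n-k) hz]
            ring
          · have hkn : k = n+1 := by omega
            subst hkn
            simp [D_zero_right]
        rw [Finset.sum_congr rfl step, Finset.sum_add_distrib, ihy]
        have h2 : ∑ k ∈ Finset.range (n+1+1),
            D z x k * (if k ≤ n then D z (y+z) (n-k) else 0)
            = ∑ k ∈ Finset.range (n+1), D z x k * D z (y+z) (n-k) := by
          rw [Finset.sum_range_succ, if_neg (by omega), mul_zero, add_zero]
          refine Finset.sum_congr rfl fun k hk => ?_
          simp only [Finset.mem_range] at hk
          rw [if_pos (by omega)]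
        rw [h2, ih n (by omega) x (y+z)]
        have := D_pascal z (x+y) n hz
        rw [show x + (y+1) = (x+y)+1 by ring, this, show x + y + z = x + (y+z) by ring]

lemma Nplus_eq_D (m' j : ℕ) : Nplus j (m'+1) = D (m'+2) (m'+1) j := by
  have hA : ((j:ℤ)+1)*((m'+1:ℕ):ℤ) + j - 1 = ((j*(m'+2)+m' : ℕ) : ℤ) := by
    push_cast; ring
  have hle : j ≤ j*(m'+2)+m' := by nlinarith
  rw [Nplus, cc, hA, if_pos ⟨Int.natCast_nonneg j, by exact_mod_cast hle⟩]
  rw [Int.toNat_natCast, Int.toNat_natCast]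
  rcases j with _ | k
  · simp [D]
  · have e : (m'+1) + (k+1)*(m'+2) = (k+1)*(m'+2)+m' + 1 := by ring
    have hAk : ((((k+1)*(m'+2)+m' : ℕ)):ℚ) - k = ((m':ℚ)+1)*((k:ℚ)+2) := by
      push_cast; ring
    have hca := chooseA ((k+1)*(m'+2)+m') k
    simp only [D, if_neg (Nat.succ_ne_zero k)]
    have hd : ((m'+1:ℕ):ℚ) + ((k+1:ℕ):ℚ) * ((m'+2:ℕ):ℚ)
        = (((k+1)*(m'+2)+m' : ℕ):ℚ) + 1 := by push_cast; ring
    push_cast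
    rw [show ((m':ℚ)+1) + ((k:ℚ)+1)*((m':ℚ)+2) = (((k+1)*(m'+2)+m' : ℕ):ℚ) + 1 from by
      push_cast; ring]
    rw [show (m'+1) + (k+1)*(m'+2) = (k+1)*(m'+2)+m' + 1 from by ring]
    set A := (k+1)*(m'+2)+m' with hAdef
    have hA1 : (A:ℚ) + 1 ≠ 0 := by positivity
    have hk2 : ((k:ℚ)+1) + 1 ≠ 0 := by positivity
    field_simp
    linear_combination hca + ((((A+1).choose (k+1) : ℕ)):ℚ) * hAk


/-- The recurrence for the positive Fuss–Catalan numbers: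
`2n·N⁺(n, m) = ((m+1)(n+1)−2) · Σ_{i=1}^{n} N⁺(i−1, m)·N⁺(n−i, m)`. -/
theorem positive_fuss_catalan_recurrence (n m : ℕ) (hn : 1 ≤ n) (hm : 1 ≤ m) :
    2 * (n : ℚ) * Nplus n m
      = (((m : ℚ) + 1) * ((n : ℚ) + 1) - 2) *
          ∑ i ∈ Finset.Icc 1 n, Nplus (i - 1) m * Nplus (n - i) m := by
  obtain ⟨m', rfl⟩ : ∃ m', m = m'+1 := ⟨m-1, by omega⟩
  obtain ⟨n', rfl⟩ : ∃ n', n = n'+1 := ⟨n-1, by omega⟩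
  have hsum : ∑ i ∈ Finset.Icc 1 (n'+1), Nplus (i-1) (m'+1) * Nplus ((n'+1)-i) (m'+1)
      = ∑ k ∈ Finset.range (n'+1), D (m'+2) (m'+1) k * D (m'+2) (m'+1) (n'-k) := by
    rw [show Finset.Icc 1 (n'+1) = Finset.Ico 1 (n'+2) from by rw [← Finset.Ico_add_one_right_eq_Icc]; rfl]
    rw [Finset.sum_Ico_eq_sum_range]
    refine Finset.sum_congr (by norm_num) fun k hk => ?_
    rw [show 1 + k - 1 = k from by omega, show n'+1-(1+k) = n'-k from by omega,
        Nplus_eq_D, Nplus_eq_D]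
  rw [hsum, conv (m'+2) (by omega) n' (m'+1) (m'+1), Nplus_eq_D]
  have hadef : (m'+1)+(m'+1) + n'*(m'+2) = 2*(m'+1) + n'*(m'+2) := by ring
  set a := 2*(m'+1) + n'*(m'+2) with ha
  have hacast : (a:ℚ) = 2*((m':ℚ)+1) + (n':ℚ)*((m':ℚ)+2) := by rw [ha]; push_cast; ring
  have ha0 : (a:ℚ) ≠ 0 := by positivity
  have ha1 : (a:ℚ) + 1 ≠ 0 := by positivity
  have key : (((m'+1:ℕ):ℚ) + 1) * (((n'+1:ℕ):ℚ) + 1) - 2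
      = (a:ℚ) := by rw [hacast]; push_cast; ring
  rw [key]
  have key2 : (a:ℚ) * D (m'+2) ((m'+1)+(m'+1)) n'
      = 2*((m':ℚ)+1) * ((a.choose n' : ℕ):ℚ) := by
    rcases n' with _ | k
    · simp only [D, if_pos rfl, Nat.choose_zero_right, Nat.cast_one, mul_one]
      rw [hacast]; push_cast; ring
    · simp only [D, if_neg (Nat.succ_ne_zero k)]
      have e1 : (m'+1)+(m'+1) + (k+1)*(m'+2) = a := by rw [ha]; ring
      rw [e1]
      have hden : ((((m'+1)+(m'+1):ℕ)):ℚ) + (((k+1:ℕ)):ℚ) * (((m'+2:ℕ)):ℚ) = (a:ℚ) := by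
        rw [hacast]; push_cast; ring
      have hcan : ((a:ℚ)) * ((((m'+1)+(m'+1):ℕ):ℚ) / ((a:ℚ))) = (((m'+1)+(m'+1):ℕ):ℚ) := by
        field_simp
      rw [hden, ← mul_assoc, hcan]
      push_cast
      ring
  rw [key2]
  have hB := chooseB a n'
  simp only [D, if_neg (Nat.succ_ne_zero n')]
  have e2 : (m'+1) + (n'+1)*(m'+2) = a + 1 := by rw [ha]; ring
  rw [e2]
  have hden2 : ((((m'+1):ℕ)):ℚ) + (((n'+1:ℕ)):ℚ) * (((m'+2:ℕ)):ℚ) = (a:ℚ) + 1 := by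
    rw [hacast]; push_cast; ring
  rw [hden2]
  push_cast
  field_simp
  linear_combination (-1:ℚ) * hB
end
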